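/- arXiv:2504.08107 — 11 statements merged into one kernel-verified Lean document; each statement's English description precedes it below -/
import Mathlib

section
/- Let A be a locally compact abelian group and π : A → ℝ₊ a continuous injective group homomorphism into the multiplicative group of positive reals. Then either π is an isomorphism of topological groups onto ℝ₊, or A is discrete. -/
/-!
Let `K` be a compact neighbourhood of `1`. If `π '' K` has nonempty interior, then, since `K` is
covered by finitely many translates of any closed neighbourhood `V` of `1`, some piece
`π '' (K ∩ gV)` of this finite closed cover has nonempty interior, and translating back shows that
`π '' (V⁻¹V)` is a neighbourhood of `1`. So `π` is open, and its range is an open subgroup of the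
connected group `ℝ₊`. If `π '' K` has empty interior, cutting `K` along two values `s < 1 < t`
missed by `π` on `K` yields a compact open neighbourhood `C` of `1`. Every `x` close to `1`
satisfies `x C ⊆ C`, so all powers of `x` lie in `C`; but the powers of `π x` stay in the compact
set `π '' C` only if `π x = 1`. Hence `{1}` is open.
-/

open Set Filter Topology Pointwise

instance : ContinuousMul {x : ℝ // 0 < x} :=
  ⟨(continuous_subtype_val.fst'.mul continuous_subtype_val.snd').subtype_mk _⟩

instance : ContinuousInv {x : ℝ // 0 < x} :=
  ⟨(continuous_subtype_val.inv₀ fun x => x.2.ne').subtype_mk _⟩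

instance : IsTopologicalGroup {x : ℝ // 0 < x} where

instance : ConnectedSpace {x : ℝ // 0 < x} :=
  isConnected_iff_connectedSpace.1 (isConnected_Ioi (a := (0 : ℝ)))

theorem Function.Injective.nonempty_interior_of_nonempty_interior_image {X Y : Type*}
    [TopologicalSpace X] [TopologicalSpace Y] {f : X → Y} (hinj : Injective f)
    (hf : Continuous f) {s : Set X} (h : (interior (f '' s)).Nonempty) :
    (interior s).Nonempty := by
  obtain ⟨y, hy⟩ := h
  obtain ⟨x, -, rfl⟩ := interior_subset hy
  refine ⟨x, ?_⟩
  rw [← hinj.preimage_image s]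
  exact preimage_interior_subset_interior_preimage hf hy

theorem exists_nonempty_interior_of_nonempty_interior_biUnion {ι X : Type*}
    [TopologicalSpace X] {t : Finset ι} {F : ι → Set X} (hF : ∀ i ∈ t, IsClosed (F i))
    (h : (interior (⋃ i ∈ t, F i)).Nonempty) : ∃ i ∈ t, (interior (F i)).Nonempty := by
  classical
  contrapose! h
  induction t using Finset.induction_on with
  | empty => simp
  | insert a s _ ih =>
    rw [Finset.set_biUnion_insert, interior_union_isClosed_of_interior_empty
      (hF a (Finset.mem_insert_self a s)) (ih (fun i hi => hF i (Finset.mem_insert_of_mem hi))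
        (fun i hi => h i (Finset.mem_insert_of_mem hi)))]
    exact h a (Finset.mem_insert_self a s)

section TopologicalGroup

variable {G H : Type*} [Group G] [TopologicalSpace G] [IsTopologicalGroup G]
  [Group H] [TopologicalSpace H] [IsTopologicalGroup H]

theorem MonoidHom.nhds_one_le_map_of_nonempty_interior_image [T2Space H] {φ : G →* H}
    (hφ : Continuous φ) {K : Set G} (hK : IsCompact K) (hKφ : (interior (φ '' K)).Nonempty) :
    𝓝 1 ≤ map φ (𝓝 1) := by
  refine le_map fun U hU => ?_
  obtain ⟨V, hV, hVc, hVinv, hVU⟩ := exists_closed_nhds_one_inv_eq_mul_subset hU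
  obtain ⟨t, ht⟩ := compact_covered_by_mul_left_translates hK
    ⟨1, mem_interior_iff_mem_nhds.2 hV⟩
  set F : G → Set H := fun g => φ '' (K ∩ (g * ·) ⁻¹' V)
  have hF : ∀ g ∈ t, IsClosed (F g) := fun g _ =>
    ((hK.inter_right (hVc.preimage (continuous_const_mul g))).image hφ).isClosed
  have hKF : φ '' K ⊆ ⋃ g ∈ t, F g := by
    rintro _ ⟨k, hk, rfl⟩
    obtain ⟨g, hg, hkg⟩ := mem_iUnion₂.1 (ht hk)
    exact mem_iUnion₂.2 ⟨g, hg, k, ⟨hk, hkg⟩, rfl⟩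
  obtain ⟨g, -, y, hy⟩ :=
    exists_nonempty_interior_of_nonempty_interior_biUnion hF (hKφ.mono (interior_mono hKF))
  obtain ⟨k, ⟨-, hk⟩, rfl⟩ := interior_subset hy
  -- if `φ k` and `φ k'` both lie in `F g`, then `φ (k⁻¹ * k') ∈ φ '' (V⁻¹ * V)`
  have hshift : (φ k * ·) ⁻¹' F g ⊆ φ '' U := by
    rintro w ⟨k', ⟨-, hk'⟩, hw⟩
    refine ⟨(g * k)⁻¹ * (g * k'), hVU (mul_mem_mul (hVinv ▸ inv_mem_inv.2 hk) hk'), ?_⟩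
    rw [mul_inv_rev, mul_assoc, inv_mul_cancel_left, map_mul, map_inv, hw, inv_mul_cancel_left]
  exact mem_of_superset ((continuous_const_mul (φ k)).tendsto' 1 _ (mul_one _)
    (mem_interior_iff_mem_nhds.1 hy)) hshift

theorem MonoidHom.isOpenMap_of_nhds_one_le_map (φ : G →* H) (h : 𝓝 1 ≤ map φ (𝓝 1)) :
    IsOpenMap φ := by
  refine isOpenMap_iff_nhds_le.2 fun x => ?_
  calc 𝓝 (φ x) = map (φ x * ·) (𝓝 1) := (map_mul_left_nhds_one _).symm
    _ ≤ map (φ x * ·) (map φ (𝓝 1)) := map_mono (map_one φ ▸ h)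
    _ = map φ (map (x * ·) (𝓝 1)) := by simp only [map_map, Function.comp_def, map_mul]
    _ = map φ (𝓝 x) := by rw [map_mul_left_nhds_one]

theorem exists_mem_nhds_one_forall_pow_mem {C : Set G} (hCc : IsCompact C) (hCo : IsOpen C)
    (hC1 : 1 ∈ C) : ∃ U ∈ 𝓝 (1 : G), ∀ x ∈ U, ∀ n : ℕ, x ^ n ∈ C := by
  obtain ⟨U, hU, hUC⟩ := compact_open_separated_mul_left hCc hCo subset_rfl
  refine ⟨U, hU, fun x hx n => ?_⟩
  induction n with
  | zero => simpa using hC1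
  | succ n ih => simpa only [pow_succ'] using hUC (mul_mem_mul hx ih)

end TopologicalGroup

theorem MonoidHom.surjective_of_isOpenMap {G H : Type*} [Group G] [TopologicalSpace G] [Group H]
    [TopologicalSpace H] [IsTopologicalGroup H] [ConnectedSpace H] (φ : G →* H)
    (h : IsOpenMap φ) : Function.Surjective φ := by
  have hopen : IsOpen (φ.range : Set H) := by
    simpa only [MonoidHom.coe_range] using h.isOpen_range
  have huniv := IsClopen.eq_univ ⟨Subgroup.isClosed_of_isOpen _ hopen, hopen⟩ ⟨1, one_mem _⟩
  exact MonoidHom.range_eq_top.1 (SetLike.coe_injective (huniv.trans Subgroup.coe_top.symm))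

theorem Positive.eq_one_of_pow_mem_isCompact {y : {x : ℝ // 0 < x}} {L : Set {x : ℝ // 0 < x}}
    (hL : IsCompact L) (hy : ∀ n : ℕ, y ^ n ∈ L) : y = 1 := by
  obtain ⟨B, hB⟩ := (hL.image continuous_subtype_val).bddAbove
  obtain ⟨m, -, hm⟩ := hL.exists_isMinOn ⟨_, hy 0⟩ continuous_subtype_val.continuousOn
  have hbounds : ∀ n : ℕ, (m : ℝ) ≤ (y : ℝ) ^ n ∧ (y : ℝ) ^ n ≤ B := fun n =>
    ⟨Positive.val_pow y n ▸ hm (hy n),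
      Positive.val_pow y n ▸ hB (mem_image_of_mem _ (hy n))⟩
  refine Subtype.ext (le_antisymm ?_ ?_)
  · by_contra! hgt
    obtain ⟨n, hn⟩ := pow_unbounded_of_one_lt B hgt
    exact hn.not_ge (hbounds n).2
  · by_contra! hlt
    obtain ⟨n, hn⟩ := exists_pow_lt_of_lt_one m.2 hlt
    exact hn.not_ge (hbounds n).1

theorem discreteTopology_of_isCompact_isOpen_of_injective {G : Type*} [Group G]
    [TopologicalSpace G] [IsTopologicalGroup G] {φ : G →* {x : ℝ // 0 < x}}
    (hφ : Continuous φ) (hinj : Function.Injective φ) {C : Set G} (hCc : IsCompact C)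
    (hCo : IsOpen C) (hC1 : 1 ∈ C) : DiscreteTopology G := by
  obtain ⟨U, hU, hpow⟩ := exists_mem_nhds_one_forall_pow_mem hCc hCo hC1
  have hU1 : U ⊆ {1} := fun x hx => hinj <| (map_one φ).symm ▸
    Positive.eq_one_of_pow_mem_isCompact (hCc.image hφ) fun n =>
      ⟨x ^ n, hpow x hx n, map_pow φ x n⟩
  exact discreteTopology_of_isOpen_singleton_one
    (isOpen_iff_mem_nhds.2 fun _ hx => (mem_singleton_iff.1 hx).symm ▸ mem_of_superset hU hU1)

theorem exists_isCompact_isOpen_mem_of_interior_image_eq_empty {X : Type*} [TopologicalSpace X]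
    {f : X → ℝ} (hf : Continuous f) (hinj : Function.Injective f) {K : Set X} {x : X}
    (hK : IsCompact K) (hKx : K ∈ 𝓝 x) (hKf : interior (f '' K) = ∅) :
    ∃ C, IsCompact C ∧ IsOpen C ∧ x ∈ C := by
  have hx : x ∈ interior K := mem_interior_iff_mem_nhds.2 hKx
  have hfrontier : (f '' (K \ interior K))ᶜ ∈ 𝓝 (f x) := by
    refine ((hK.diff isOpen_interior).image hf).isClosed.isOpen_compl.mem_nhds ?_
    rintro ⟨y, ⟨-, hy⟩, hyx⟩
    exact hy (hinj hyx ▸ hx)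
  obtain ⟨l, u, ⟨hlx, hxu⟩, hlu⟩ := mem_nhds_iff_exists_Ioo_subset.1 hfrontier
  have hmiss : ∀ a b, a < b → ∃ c ∈ Ioo a b, c ∉ f '' K := fun a b hab => by
    by_contra! h
    have := interior_maximal h isOpen_Ioo
    rw [hKf, subset_empty_iff] at this
    exact (nonempty_Ioo.2 hab).ne_empty this
  obtain ⟨s, ⟨hls, hsx⟩, hsK⟩ := hmiss l (f x) hlx
  obtain ⟨t, ⟨hxt, htu⟩, htK⟩ := hmiss (f x) u hxu
  -- `f` misses the levels `s, t` on `K`, and `(s, t)` avoids `f '' (K \ interior K)`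
  have hcut : K ∩ f ⁻¹' Icc s t = interior K ∩ f ⁻¹' Ioo s t := by
    refine Subset.antisymm (fun y ⟨hyK, hys, hyt⟩ => ?_)
      (inter_subset_inter interior_subset (preimage_mono Ioo_subset_Icc_self))
    have hy : f y ∈ Ioo s t := ⟨hys.lt_of_ne fun h => hsK (h ▸ mem_image_of_mem f hyK),
      hyt.lt_of_ne fun h => htK (h ▸ mem_image_of_mem f hyK)⟩
    exact ⟨by_contra fun hyi => hlu ⟨hls.trans hy.1, hy.2.trans htu⟩ ⟨y, ⟨hyK, hyi⟩, rfl⟩,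
      hy⟩
  refine ⟨K ∩ f ⁻¹' Icc s t, hK.inter_right (isClosed_Icc.preimage hf), ?_, ?_⟩
  · rw [hcut]
    exact isOpen_interior.inter (isOpen_Ioo.preimage hf)
  · exact ⟨interior_subset hx, hsx.le, hxt.le⟩

theorem continuous_injective_hom_to_posReal_bijective_open_or_discrete_general
    {A : Type*} [CommGroup A] [TopologicalSpace A] [IsTopologicalGroup A]
    [LocallyCompactSpace A]
    (π : A →* {x : ℝ // 0 < x}) (hπc : Continuous π) (hπinj : Function.Injective π) :
    (Function.Bijective π ∧ IsOpenMap π) ∨ DiscreteTopology A := by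
  obtain ⟨K, hKc, hK1⟩ := exists_compact_mem_nhds (1 : A)
  by_cases hK : (interior ((fun a => (π a : ℝ)) '' K)).Nonempty
  · rw [← image_image] at hK
    have hopen := π.isOpenMap_of_nhds_one_le_map <| π.nhds_one_le_map_of_nonempty_interior_image
      hπc hKc (Subtype.val_injective.nonempty_interior_of_nonempty_interior_image
        continuous_subtype_val hK)
    exact Or.inl ⟨⟨hπinj, π.surjective_of_isOpenMap hopen⟩, hopen⟩
  · obtain ⟨C, hCc, hCo, hC1⟩ := exists_isCompact_isOpen_mem_of_interior_image_eq_empty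
      (continuous_subtype_val.comp hπc) (Subtype.val_injective.comp hπinj) hKc hK1
      (not_nonempty_iff_eq_empty.1 hK)
    exact Or.inr (discreteTopology_of_isCompact_isOpen_of_injective hπc hπinj hCc hCo hC1)

/-- If `A` is a locally compact abelian group and `π : A → ℝ₊` is a continuous
injective homomorphism into the multiplicative group of positive reals, then either `π` is an
isomorphism of topological groups onto `ℝ₊` (i.e. it is bijective and an open map, hence a
homeomorphic group isomorphism), or `A` is discrete. -/
theorem continuous_injective_hom_to_posReal_bijective_open_or_discrete
    {A : Type*} [CommGroup A] [TopologicalSpace A] [IsTopologicalGroup A]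
    [LocallyCompactSpace A] [T2Space A]
    (π : A →* {x : ℝ // 0 < x}) (hπc : Continuous π) (hπinj : Function.Injective π) :
    (Function.Bijective π ∧ IsOpenMap π) ∨ DiscreteTopology A :=
  continuous_injective_hom_to_posReal_bijective_open_or_discrete_general π hπc hπinj
end

section
/- Let G be a totally disconnected locally compact group, U a compact open subgroup of G, and t ∈ G. Then [U : U ∩ tUt⁻¹] = Δ_G(t) · [U : t⁻¹Ut ∩ U], where both indices are finite. In particular, Δ_G(t) is a positive rational number for every t ∈ G. -/
/-!
`U` is the disjoint union of `[U : U ∩ tUt⁻¹]` left translates of `U ∩ tUt⁻¹`, and likewise of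
`[U : t⁻¹Ut ∩ U]` translates of `t⁻¹Ut ∩ U`, so Haar measure gives two expressions for `μ U`.
Conjugation by `t⁻¹` maps `U ∩ tUt⁻¹` onto `t⁻¹Ut ∩ U`, and by left invariance it scales Haar
measure like right translation by `t⁻¹`, i.e. by `Δ t`. Both intersections are compact open,
so of finite positive measure, which can be cancelled.
-/

open MeasureTheory
open scoped NNReal ENNReal Pointwise

namespace Subgroup

variable {G : Type*} [Group G]

theorem isFiniteRelIndex_of_isOpen_of_isCompact [TopologicalSpace G] [IsTopologicalGroup G]
    {H K : Subgroup G} (hH : IsOpen (H : Set G)) (hK : IsCompact (K : Set G)) :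
    H.IsFiniteRelIndex K := by
  have : CompactSpace K := isCompact_iff_compactSpace.mp hK
  have : Finite (K ⧸ H.subgroupOf K) :=
    (H.subgroupOf K).quotient_finite_of_isOpen (hH.preimage continuous_subtype_val)
  exact ⟨index_ne_zero_of_finite⟩

theorem isOpen_map_conj [TopologicalSpace G] [IsTopologicalGroup G] {U : Subgroup G}
    (hU : IsOpen (U : Set G)) (t : G) :
    IsOpen (U.map (MulAut.conj t).toMonoidHom : Set G) := by
  have : (U.map (MulAut.conj t).toMonoidHom : Set G) = (fun x ↦ t⁻¹ * x * t) ⁻¹' U := by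
    ext x
    simp only [SetLike.mem_coe, mem_map_equiv, MulAut.conj_symm_apply, Set.mem_preimage]
  rw [this]
  exact hU.preimage (by fun_prop)

instance [MeasurableSpace G] [MeasurableMul G] (K : Subgroup G) : MeasurableMul K where
  measurable_const_mul c :=
    ((measurable_const_mul (c : G)).comp measurable_subtype_coe).subtype_mk
  measurable_mul_const c :=
    ((measurable_mul_const (c : G)).comp measurable_subtype_coe).subtype_mk

theorem relIndex_mul_measure_inf [MeasurableSpace G] [MeasurableMul G]
    (μ : Measure G) [μ.IsMulLeftInvariant] (H K : Subgroup G) [H.IsFiniteRelIndex K]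
    (hH : MeasurableSet (H : Set G)) (hK : MeasurableSet (K : Set G)) :
    H.relIndex K * μ (H ⊓ K : Subgroup G) = μ K := by
  have hK' : MeasurableEmbedding K.subtype := MeasurableEmbedding.subtype_coe hK
  have : (μ.comap K.subtype).IsMulLeftInvariant := Measure.IsMulLeftInvariant.comap μ hK'
  have := (H.subgroupOf K).index_mul_measure (measurable_subtype_coe hH) (μ.comap K.subtype)
  rwa [hK'.comap_apply, hK'.comap_apply, ← coe_map, subgroupOf_map_subtype, Set.image_univ,
    coe_subtype, Subtype.range_coe] at this

end Subgroup

theorem MeasureTheory.Measure.measure_conj_image {G : Type*} [Group G] [MeasurableSpace G]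
    [MeasurableMul G] (μ : Measure G) [μ.IsMulLeftInvariant] (t : G) {s : Set G}
    (hs : MeasurableSet s) : μ (MulAut.conj t '' s) = μ.map (· * t) s := by
  have : MulAut.conj t '' s = t • ((· * t) ⁻¹' s) := by
    ext x
    rw [Set.mem_smul_set_iff_inv_smul_mem, ← MulEquiv.coe_toEquiv, Set.mem_image_equiv]
    simp [mul_assoc]
  rw [this, measure_smul, Measure.map_apply (measurable_mul_const t) hs]

theorem relIndex_map_conj_eq_mul_relIndex_map_conj_inv {G : Type*} [Group G]
    [TopologicalSpace G] [IsTopologicalGroup G] [MeasurableSpace G] [BorelSpace G]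
    (μ : Measure G) [μ.IsHaarMeasure] (Δ : G →* ℝ≥0)
    (hΔ : ∀ s : G, Measure.map (· * s) μ = (Δ s)⁻¹ • μ)
    {U : Subgroup G} (hUc : IsCompact (U : Set G)) (hUo : IsOpen (U : Set G)) (t : G) :
    ((U.map (MulAut.conj t).toMonoidHom).relIndex U : ℝ≥0)
      = Δ t * (U.map (MulAut.conj t⁻¹).toMonoidHom).relIndex U := by
  set A := U.map (MulAut.conj t).toMonoidHom
  set B := U.map (MulAut.conj t⁻¹).toMonoidHom
  have hAo : IsOpen (A : Set G) := U.isOpen_map_conj hUo t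
  have hBo : IsOpen (B : Set G) := U.isOpen_map_conj hUo t⁻¹
  have := Subgroup.isFiniteRelIndex_of_isOpen_of_isCompact hAo hUc
  have := Subgroup.isFiniteRelIndex_of_isOpen_of_isCompact hBo hUc
  have hAU : MeasurableSet ((A ⊓ U : Subgroup G) : Set G) := (hAo.inter hUo).measurableSet
  have hconj : (A ⊓ U).map (MulAut.conj t⁻¹).toMonoidHom = B ⊓ U := by
    ext x
    simp only [A, B, Subgroup.mem_inf, Subgroup.mem_map_equiv, MulAut.conj_symm_apply, inv_inv]
    simp [mul_assoc, and_comm]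
  have hμB : μ (B ⊓ U : Subgroup G) = Δ t * μ (A ⊓ U : Subgroup G) := by
    rw [← hconj, Subgroup.coe_map, MulEquiv.coe_toMonoidHom, μ.measure_conj_image t⁻¹ hAU, hΔ,
      Measure.smul_apply, map_inv, inv_inv, ENNReal.smul_def, smul_eq_mul]
  have hμA₀ : μ (A ⊓ U : Subgroup G) ≠ 0 :=
    (hAo.inter hUo).measure_ne_zero μ ⟨1, A.one_mem, U.one_mem⟩
  have hμA_top : μ (A ⊓ U : Subgroup G) ≠ ⊤ :=
    (measure_mono inf_le_right).trans_lt hUc.measure_lt_top |>.ne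
  suffices (A.relIndex U : ℝ≥0∞) = Δ t * B.relIndex U by exact_mod_cast this
  refine (ENNReal.mul_left_inj hμA₀ hμA_top).1 ?_
  calc (A.relIndex U : ℝ≥0∞) * μ (A ⊓ U : Subgroup G)
      = μ U := A.relIndex_mul_measure_inf μ U hAo.measurableSet hUo.measurableSet
    _ = B.relIndex U * μ (B ⊓ U : Subgroup G) :=
      (B.relIndex_mul_measure_inf μ U hBo.measurableSet hUo.measurableSet).symm
    _ = Δ t * B.relIndex U * μ (A ⊓ U : Subgroup G) := by rw [hμB]; ring

theorem relindex_conj_eq_modularFunction_mul_and_rational_general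
    {G : Type*} [Group G] [TopologicalSpace G] [IsTopologicalGroup G]
    [MeasurableSpace G] [BorelSpace G]
    (μ : Measure G) [μ.IsHaarMeasure]
    (Δ : G →* ℝ≥0)
    (hΔ : ∀ s : G, Measure.map (· * s) μ = (Δ s)⁻¹ • μ)
    (U : Subgroup G) (hUc : IsCompact (U : Set G)) (hUo : IsOpen (U : Set G)) (t : G) :
    (U.map (MulAut.conj t).toMonoidHom).relIndex U ≠ 0 ∧
    (U.map (MulAut.conj t⁻¹).toMonoidHom).relIndex U ≠ 0 ∧
    ((U.map (MulAut.conj t).toMonoidHom).relIndex U : ℝ≥0)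
      = Δ t * ((U.map (MulAut.conj t⁻¹).toMonoidHom).relIndex U : ℝ≥0) ∧
    ∀ s : G, ∃ q : ℚ, 0 < q ∧ ((Δ s : ℝ≥0) : ℝ) = (q : ℝ) := by
  have relIndex_ne_zero (s : G) : (U.map (MulAut.conj s).toMonoidHom).relIndex U ≠ 0 :=
    (Subgroup.isFiniteRelIndex_of_isOpen_of_isCompact (U.isOpen_map_conj hUo s) hUc).1
  refine ⟨relIndex_ne_zero t, relIndex_ne_zero t⁻¹,
    relIndex_map_conj_eq_mul_relIndex_map_conj_inv μ Δ hΔ hUc hUo t, fun s ↦ ?_⟩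
  set a := (U.map (MulAut.conj s).toMonoidHom).relIndex U
  set b := (U.map (MulAut.conj s⁻¹).toMonoidHom).relIndex U
  have ha : 0 < a := Nat.pos_of_ne_zero (relIndex_ne_zero s)
  have hb : 0 < b := Nat.pos_of_ne_zero (relIndex_ne_zero s⁻¹)
  have hab : (a : ℝ) = Δ s * b := by
    exact_mod_cast relIndex_map_conj_eq_mul_relIndex_map_conj_inv μ Δ hΔ hUc hUo s
  refine ⟨a / b, by positivity, ?_⟩
  rw [Rat.cast_div, Rat.cast_natCast, Rat.cast_natCast, hab, mul_div_assoc,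
    div_self (by positivity), mul_one]

/-- For a totally disconnected locally compact group `G` with modular function
`Δ`, a compact open subgroup `U` and `t ∈ G`, one has
`[U : U ∩ tUt⁻¹] = Δ(t) · [U : t⁻¹Ut ∩ U]`, with both indices finite (nonzero in Mathlib's
`relindex` convention). In particular `Δ(t)` is a positive rational for every `t`. -/
theorem relindex_conj_eq_modularFunction_mul_and_rational
    {G : Type*} [Group G] [TopologicalSpace G] [IsTopologicalGroup G]
    [LocallyCompactSpace G] [T2Space G] [TotallyDisconnectedSpace G]
    [MeasurableSpace G] [BorelSpace G]
    (μ : Measure G) [μ.IsHaarMeasure] [μ.Regular]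
    (Δ : G →* ℝ≥0) (hΔc : Continuous Δ) (hΔpos : ∀ s, 0 < Δ s)
    (hΔ : ∀ s : G, Measure.map (· * s) μ = (Δ s)⁻¹ • μ)
    (U : Subgroup G) (hUc : IsCompact (U : Set G)) (hUo : IsOpen (U : Set G)) (t : G) :
    (U.map (MulAut.conj t).toMonoidHom).relIndex U ≠ 0 ∧
    (U.map (MulAut.conj t⁻¹).toMonoidHom).relIndex U ≠ 0 ∧
    ((U.map (MulAut.conj t).toMonoidHom).relIndex U : ℝ≥0)
      = Δ t * ((U.map (MulAut.conj t⁻¹).toMonoidHom).relIndex U : ℝ≥0) ∧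
    ∀ s : G, ∃ q : ℚ, 0 < q ∧ ((Δ s : ℝ≥0) : ℝ) = (q : ℝ) :=
  relindex_conj_eq_modularFunction_mul_and_rational_general μ Δ hΔ U hUc hUo t
end

section
/- Let 1 → N → G → H → 1 be a short exact sequence of locally compact groups, where N is a closed normal subgroup of G and H ≅ G/N. If N is almost unimodular and H is discrete, then G is almost unimodular. -/
open MeasureTheory Measure
open scoped NNReal

/-!
Since `G ⧸ N` is discrete, `N` is an open subgroup of `G`, so the restriction of a left Haar
measure of `G` to `N` is a left Haar measure of `N`, and right translation by `n ∈ N` commutes with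
this restriction. By uniqueness of Haar measure the factor by which right translation by `n`
rescales a left Haar measure does not depend on the measure, hence `Δ_N = Δ` on `N`. Thus
`ker Δ ∩ N = ker Δ_N` is open in the open subgroup `N`, so the subgroup `ker Δ` of `G` is open.
-/

theorem Subgroup.isOpen_of_isOpen_subgroupOf {G : Type*} [Group G] [TopologicalSpace G]
    [SeparatelyContinuousMul G] {K U : Subgroup G} (hU : IsOpen (U : Set G))
    (hK : IsOpen (K.subgroupOf U : Set U)) : IsOpen (K : Set G) := by
  have hopen : IsOpen (((↑) : U → G) '' (K.subgroupOf U : Set U)) := hU.isOpenMap_subtype_val _ hK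
  refine K.isOpen_of_mem_nhds (Filter.mem_of_superset (hopen.mem_nhds ⟨1, one_mem _, rfl⟩) ?_)
  rintro _ ⟨x, hx, rfl⟩
  exact hx

namespace MeasureTheory.Measure

theorem map_mul_right_comap_subtype {G : Type*} [Group G] [MeasurableSpace G] [MeasurableMul G]
    (N : Subgroup G) (hN : MeasurableSet (N : Set G)) (μ : Measure G) (n : N) :
    (μ.comap N.subtype).map (· * n) = (μ.map (· * (n : G))).comap N.subtype := by
  have hemb : MeasurableEmbedding N.subtype := MeasurableEmbedding.subtype_coe hN
  have hmul : Measurable (· * n : N → N) := (measurable_subtype_coe.mul_const (n : G)).subtype_mk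
  ext s hs
  rw [map_apply hmul hs, hemb.comap_apply, hemb.comap_apply,
    map_apply (measurable_mul_const _) (hemb.measurableSet_image' hs)]
  congr 1
  ext x
  constructor
  · rintro ⟨y, hy, rfl⟩
    exact ⟨y * n, hy, rfl⟩
  · rintro ⟨y, hy, hyx⟩
    replace hyx : (y : G) = x * n := hyx
    have hx : x ∈ N := by simpa [hyx] using mul_mem y.2 (inv_mem n.2)
    refine ⟨⟨x, hx⟩, ?_, rfl⟩
    have hy_eq : y = ⟨x, hx⟩ * n := Subtype.ext hyx
    rwa [Set.mem_preimage, ← hy_eq]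

variable {G : Type*} [Group G] [TopologicalSpace G] [IsTopologicalGroup G] [LocallyCompactSpace G]
  [MeasurableSpace G] [BorelSpace G]

theorem modularCharacterFun_eq_of_map_mul_right (μ : Measure G) [IsHaarMeasure μ] {g : G}
    {c : ℝ≥0} (h : μ.map (· * g) = c • μ) : modularCharacterFun g = c := by
  simp [modularCharacterFun_eq_haarScalarFactor μ, h, haarScalarFactor_self]

theorem eq_of_map_mul_right_eq_smul (μ ν : Measure G) [IsHaarMeasure μ] [IsHaarMeasure ν] {g : G}
    {a b : ℝ≥0} (hμ : μ.map (· * g) = a • μ) (hν : ν.map (· * g) = b • ν) : a = b :=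
  (modularCharacterFun_eq_of_map_mul_right μ hμ).symm.trans
    (modularCharacterFun_eq_of_map_mul_right ν hν)

end MeasureTheory.Measure

theorem almost_unimodular_of_extension_by_discrete_general
    {G : Type*} [Group G] [TopologicalSpace G] [IsTopologicalGroup G]
    [LocallyCompactSpace G] [MeasurableSpace G] [BorelSpace G]
    (μ : Measure G) [μ.IsHaarMeasure]
    (Δ : G →* ℝ≥0)
    (hΔ : ∀ s : G, Measure.map (· * s) μ = (Δ s)⁻¹ • μ)
    (N : Subgroup G)
    [DiscreteTopology (G ⧸ N)]
    (ν : Measure N) [ν.IsHaarMeasure]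
    (ΔN : N →* ℝ≥0)
    (hΔN : ∀ n : N, Measure.map (· * n) ν = (ΔN n)⁻¹ • ν)
    (hNau : IsOpen (ΔN.ker : Set N)) :
    IsOpen (Δ.ker : Set G) := by
  have hNopen : IsOpen (N : Set G) := QuotientGroup.discreteTopology_iff.mp ‹_›
  have := hNopen.locallyCompactSpace
  have := IsHaarMeasure.comap μ (f := N.subtype) (mH := inferInstance)
    hNopen.isOpenEmbedding_subtypeVal
  have hrestrict : ΔN = Δ.comp N.subtype := by
    ext n
    have hμN : (μ.comap N.subtype).map (· * n) = (Δ n)⁻¹ • μ.comap N.subtype := by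
      rw [map_mul_right_comap_subtype N hNopen.measurableSet, hΔ, ENNReal.smul_def,
        ENNReal.smul_def, comap_smul]
    exact congrArg _ (inv_inj.mp (eq_of_map_mul_right_eq_smul ν _ (hΔN n) hμN))
  refine Subgroup.isOpen_of_isOpen_subgroupOf hNopen ?_
  rwa [Subgroup.subgroupOf, MonoidHom.comap_ker, ← hrestrict]

/-- If `1 → N → G → G/N → 1` is a short exact sequence of locally compact groups
(`N` a closed normal subgroup with discrete quotient `G/N`), and `N` is almost unimodular
(the kernel of its modular function `Δ_N` is open in `N`), then `G` is almost unimodular. -/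
theorem almost_unimodular_of_extension_by_discrete
    {G : Type*} [Group G] [TopologicalSpace G] [IsTopologicalGroup G]
    [LocallyCompactSpace G] [T2Space G] [MeasurableSpace G] [BorelSpace G]
    (μ : Measure G) [μ.IsHaarMeasure] [μ.Regular]
    (Δ : G →* ℝ≥0) (hΔc : Continuous Δ) (hΔpos : ∀ s, 0 < Δ s)
    (hΔ : ∀ s : G, Measure.map (· * s) μ = (Δ s)⁻¹ • μ)
    (N : Subgroup G) [N.Normal] (hNclosed : IsClosed (N : Set G))
    [DiscreteTopology (G ⧸ N)]
    (ν : Measure N) [ν.IsHaarMeasure] [ν.Regular]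
    (ΔN : N →* ℝ≥0) (hΔNc : Continuous ΔN) (hΔNpos : ∀ n, 0 < ΔN n)
    (hΔN : ∀ n : N, Measure.map (· * n) ν = (ΔN n)⁻¹ • ν)
    (hNau : IsOpen (ΔN.ker : Set N)) :
    IsOpen (Δ.ker : Set G) :=
  almost_unimodular_of_extension_by_discrete_general μ Δ hΔ N ν ΔN hΔN hNau
end

section
/- Let G be an almost unimodular locally compact group and N a closed normal subgroup of G. Then N is almost unimodular. -/
/-!
Fix a Haar measure `ρ` on `G ⧸ N`. Integrating the `ν`-measures of the fibres `N ∩ g⁻¹K` against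
`ρ` gives a content `K ↦ ∫ ν(N ∩ g⁻¹K) dρ(gN)` on `G`. It is invariant under left translations
(because `ν` and `ρ` are), while right translation by `n⁻¹ ∈ N` only acts inside the fibres and
so multiplies it by `Δ_N(n)⁻¹`. The associated measure is thus left invariant, hence a multiple of
`μ` on sets with compact closure, and comparing how both measures change under right translation
by `n⁻¹` gives `Δ_G(n) = Δ_N(n)`. Consequently `ker Δ_N = N ∩ ker Δ_G` is open in `N`.
-/

open MeasureTheory Set TopologicalSpace
open scoped NNReal ENNReal Pointwise Topology

namespace MeasureTheory.Content

variable {X : Type*} [TopologicalSpace X]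

theorem mul_innerContent_comap_of_map_eq_mul (τ : Content X) (f : X ≃ₜ X) {c : ℝ≥0∞}
    (h : ∀ K : Compacts X, τ (K.map f f.continuous) = c * τ K) (U : Opens X) :
    c * τ.innerContent (Opens.comap f U) = τ.innerContent U := by
  simp only [innerContent, ENNReal.mul_iSup]
  refine (Compacts.equiv f).surjective.iSup_congr _ fun K => iSup_congr_Prop image_subset_iff ?_
  intro _
  exact h K

end MeasureTheory.Content

namespace Weil

variable {G : Type*} [Group G] {N : Subgroup G}

def slice (N : Subgroup G) (g : G) (E : Set G) : Set N := (fun m : N => g * m) ⁻¹' E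

theorem slice_mul (g : G) (m : N) (E : Set G) :
    slice N (g * m) E = (m * ·) ⁻¹' slice N g E := by
  ext; simp [slice, mul_assoc]

theorem slice_preimage_mul_left (g₀ g : G) (E : Set G) :
    slice N g ((g₀ * ·) ⁻¹' E) = slice N (g₀ * g) E := by
  ext; simp [slice, mul_assoc]

theorem slice_preimage_mul_right (g : G) (n : N) (E : Set G) :
    slice N g ((· * (n : G)) ⁻¹' E) = (· * n) ⁻¹' slice N g E := by
  ext; simp [slice, mul_assoc]

variable [TopologicalSpace G] [IsTopologicalGroup G]

theorem isClosed_slice {E : Set G} (hE : IsClosed E) (g : G) : IsClosed (slice N g E) :=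
  hE.preimage (continuous_const.mul continuous_subtype_val)

theorem isOpen_setOf_measure_slice_lt [IsClosed (N : Set G)] [MeasurableSpace G]
    (ν : Measure N) [ν.OuterRegular] {K : Set G} (hK : IsCompact K) (r : ℝ≥0∞) :
    IsOpen {g : G | ν (slice N g K) < r} := by
  refine isOpen_iff_forall_mem_open.2 fun g₀ hg₀ => ?_
  obtain ⟨O, hsO, hOo, hOr⟩ := Set.exists_isOpen_lt_of_lt _ r hg₀
  obtain ⟨U, hUo, rfl⟩ := isOpen_induced_iff.1 hOo
  -- `slice N g K ⊆ U` fails exactly when `g ∈ K * (N \ U)⁻¹`, a closed set.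
  set F : Set G := K * ((N : Set G) \ U)⁻¹
  have hF : IsClosed F := ((‹IsClosed (N : Set G)›.sdiff hUo).inv).mul_left_of_isCompact hK
  have hsub : ∀ g ∉ F, slice N g K ⊆ Subtype.val ⁻¹' U := fun g hg m hm => by
    by_contra hmU
    exact hg ⟨g * m, hm, (m : G)⁻¹, by simpa using And.intro m.2 hmU, by group⟩
  have hg₀F : g₀ ∉ F := by
    rintro ⟨k, hk, f, hf, rfl⟩
    have hf' : (⟨f⁻¹, hf.1⟩ : N) ∈ slice N (k * f) K := by simpa [slice] using hk
    exact hf.2 (hsO hf')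
  exact ⟨Fᶜ, fun g hg => (measure_mono (hsub g hg)).trans_lt hOr, hF.isOpen_compl, hg₀F⟩

variable [MeasurableSpace G] [BorelSpace G]

instance _root_.Subgroup.borelSpace (N : Subgroup G) : BorelSpace N :=
  Subtype.borelSpace (N : Set G)

theorem measurableSet_slice {E : Set G} (hE : IsClosed E) (g : G) :
    MeasurableSet (slice N g E) :=
  (isClosed_slice hE g).measurableSet

noncomputable def sliceMeasure (ν : Measure N) [ν.IsMulLeftInvariant] (E : Set G) :
    G ⧸ N → ℝ≥0∞ :=
  Quotient.lift (fun g => ν (slice N g E)) fun a b hab => by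
    obtain ⟨m, rfl⟩ : ∃ m : N, a * m = b :=
      ⟨⟨a⁻¹ * b, QuotientGroup.leftRel_apply.mp hab⟩, by simp⟩
    simp only [slice_mul, measure_preimage_mul]

variable (ν : Measure N) [ν.IsMulLeftInvariant]

@[simp]
theorem sliceMeasure_mk (E : Set G) (g : G) : sliceMeasure ν E g = ν (slice N g E) := rfl

theorem measurable_sliceMeasure [IsClosed (N : Set G)] [MeasurableSpace (G ⧸ N)]
    [BorelSpace (G ⧸ N)] [ν.OuterRegular] {K : Set G} (hK : IsCompact K) :
    Measurable (sliceMeasure ν K) := by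
  refine measurable_of_Iio fun r => IsOpen.measurableSet ?_
  rw [← (QuotientGroup.isQuotientMap_mk N).isOpen_preimage]
  exact isOpen_setOf_measure_slice_lt ν hK r

theorem sliceMeasure_le_indicator (K : Set G) (q : G ⧸ N) :
    sliceMeasure ν K q ≤ ((↑) '' K : Set (G ⧸ N)).indicator
      (fun _ => ν (Subtype.val ⁻¹' (K⁻¹ * K))) q := by
  induction q using QuotientGroup.induction_on with | H g => ?_
  rcases (slice N g K).eq_empty_or_nonempty with hempty | ⟨m₀, hm₀⟩
  · simp [hempty]
  have hm₀ : g * m₀ ∈ K := hm₀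
  have hmk : ((g * m₀ : G) : G ⧸ N) = g := QuotientGroup.mk_mul_of_mem g m₀.2
  have hq : (g : G ⧸ N) ∈ ((↑) '' K : Set (G ⧸ N)) := ⟨_, hm₀, hmk⟩
  rw [indicator_of_mem hq, ← hmk, sliceMeasure_mk]
  refine measure_mono fun m (hm : g * m₀ * m ∈ K) => ?_
  exact ⟨(g * m₀)⁻¹, inv_mem_inv.mpr hm₀, _, hm, by group⟩

theorem sliceMeasure_mono {E₁ E₂ : Set G} (h : E₁ ⊆ E₂) (q : G ⧸ N) :
    sliceMeasure ν E₁ q ≤ sliceMeasure ν E₂ q := by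
  induction q using QuotientGroup.induction_on with
  | H g => exact measure_mono (preimage_mono h)

theorem sliceMeasure_union {E₁ E₂ : Set G} (hE₂ : IsClosed E₂) (h : Disjoint E₁ E₂)
    (q : G ⧸ N) : sliceMeasure ν (E₁ ∪ E₂) q = sliceMeasure ν E₁ q + sliceMeasure ν E₂ q := by
  induction q using QuotientGroup.induction_on with
  | H g => exact measure_union (μ := ν) (h.preimage _) (measurableSet_slice hE₂ g)

theorem sliceMeasure_union_le (E₁ E₂ : Set G) (q : G ⧸ N) :
    sliceMeasure ν (E₁ ∪ E₂) q ≤ sliceMeasure ν E₁ q + sliceMeasure ν E₂ q := by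
  induction q using QuotientGroup.induction_on with
  | H g => exact measure_union_le (μ := ν) (slice N g E₁) (slice N g E₂)

theorem sliceMeasure_preimage_mul_left [N.Normal] (g₀ : G) (E : Set G) (q : G ⧸ N) :
    sliceMeasure ν ((g₀ * ·) ⁻¹' E) q = sliceMeasure ν E (g₀ * q) := by
  induction q using QuotientGroup.induction_on with
  | H g => exact congrArg ν (slice_preimage_mul_left g₀ g E)

theorem sliceMeasure_preimage_mul_right {n : N} {c : ℝ≥0} (hn : ν.map (· * n) = c • ν)
    {E : Set G} (hE : IsClosed E) (q : G ⧸ N) :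
    sliceMeasure ν ((· * (n : G)) ⁻¹' E) q = c * sliceMeasure ν E q := by
  induction q using QuotientGroup.induction_on with | H g => ?_
  rw [sliceMeasure_mk, sliceMeasure_mk, slice_preimage_mul_right,
    ← Measure.map_apply (measurable_mul_const n) (measurableSet_slice hE g), hn]
  rfl

section Content

variable [IsClosed (N : Set G)] [MeasurableSpace (G ⧸ N)] (ρ : Measure (G ⧸ N))
  [IsFiniteMeasureOnCompacts ρ] [IsFiniteMeasureOnCompacts ν]

theorem lintegral_sliceMeasure_lt_top {K : Set G} (hK : IsCompact K) :
    ∫⁻ q, sliceMeasure ν K q ∂ρ < ∞ :=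
  calc ∫⁻ q, sliceMeasure ν K q ∂ρ
      ≤ ∫⁻ q, ((↑) '' K : Set (G ⧸ N)).indicator (fun _ => ν (Subtype.val ⁻¹' (K⁻¹ * K))) q ∂ρ :=
        lintegral_mono (sliceMeasure_le_indicator ν K)
    _ ≤ ν (Subtype.val ⁻¹' (K⁻¹ * K)) * ρ ((↑) '' K) := lintegral_indicator_const_le _ _
    _ < ∞ := ENNReal.mul_lt_top
        ((Topology.IsClosedEmbedding.subtypeVal (p := (· ∈ N)) ‹_›).isCompact_preimage
          (hK.inv.mul hK)).measure_lt_top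
        (hK.image QuotientGroup.continuous_mk).measure_lt_top

variable [BorelSpace (G ⧸ N)] [ν.OuterRegular]

noncomputable def content : Content G where
  toFun K := (∫⁻ q, sliceMeasure ν K q ∂ρ).toNNReal
  mono' K₁ K₂ h := ENNReal.toNNReal_mono (lintegral_sliceMeasure_lt_top ν ρ K₂.isCompact).ne
    (lintegral_mono (sliceMeasure_mono ν h))
  sup_disjoint' K₁ K₂ h _ hK₂ := by
    simp only [Compacts.coe_sup, sliceMeasure_union ν hK₂ h]
    rw [lintegral_add_left (measurable_sliceMeasure ν K₁.isCompact)]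
    exact ENNReal.toNNReal_add (lintegral_sliceMeasure_lt_top ν ρ K₁.isCompact).ne
      (lintegral_sliceMeasure_lt_top ν ρ K₂.isCompact).ne
  sup_le' K₁ K₂ := by
    have h₁ := lintegral_sliceMeasure_lt_top ν ρ K₁.isCompact
    have h₂ := lintegral_sliceMeasure_lt_top ν ρ K₂.isCompact
    rw [← ENNReal.toNNReal_add h₁.ne h₂.ne,
      ← lintegral_add_left (measurable_sliceMeasure ν K₁.isCompact)]
    refine ENNReal.toNNReal_mono ?_ (lintegral_mono (sliceMeasure_union_le ν K₁ K₂))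
    rw [lintegral_add_left (measurable_sliceMeasure ν K₁.isCompact)]
    exact (ENNReal.add_lt_top.2 ⟨h₁, h₂⟩).ne

theorem content_apply (K : Compacts G) : content ν ρ K = ∫⁻ q, sliceMeasure ν K q ∂ρ :=
  ENNReal.coe_toNNReal (lintegral_sliceMeasure_lt_top ν ρ K.isCompact).ne

theorem content_map_mul_left [N.Normal] [ρ.IsMulLeftInvariant] (g : G) (K : Compacts G) :
    content ν ρ (K.map _ (continuous_const_mul g)) = content ν ρ K := by
  simp only [content_apply, Compacts.coe_map, image_mul_left, sliceMeasure_preimage_mul_left]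
  exact lintegral_mul_left_eq_self (sliceMeasure ν K) _

theorem content_map_mul_right_inv [T2Space G] {n : N} {c : ℝ≥0} (hn : ν.map (· * n) = c • ν)
    (K : Compacts G) :
    content ν ρ (K.map _ (continuous_mul_const (n : G)⁻¹)) = c * content ν ρ K := by
  simp only [content_apply, Compacts.coe_map, image_mul_right, inv_inv,
    sliceMeasure_preimage_mul_right ν hn K.isCompact.isClosed]
  exact lintegral_const_mul _ (measurable_sliceMeasure ν K.isCompact)

theorem content_pos [ρ.IsOpenPosMeasure] [ν.IsOpenPosMeasure] {K : Compacts G}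
    (hK : (K : Set G) ∈ 𝓝 1) : 0 < content ν ρ K := by
  obtain ⟨V, hVo, hV1, hVK⟩ := exists_open_nhds_one_mul_subset hK
  have hVq : IsOpen ((↑) '' V : Set (G ⧸ N)) := QuotientGroup.isOpenMap_coe V hVo
  have hle : ((↑) '' V : Set (G ⧸ N)).indicator (fun _ => ν (Subtype.val ⁻¹' V)) ≤
      sliceMeasure ν K := by
    intro q
    by_cases hq : q ∈ ((↑) '' V : Set (G ⧸ N))
    · obtain ⟨g, hg, rfl⟩ := hq
      rw [indicator_of_mem (mem_image_of_mem _ hg), sliceMeasure_mk]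
      exact measure_mono fun m (hm : (m : G) ∈ V) => hVK (mul_mem_mul hg hm)
    · simp [hq]
  rw [content_apply]
  refine lt_of_lt_of_le ?_ (lintegral_mono hle)
  rw [lintegral_indicator_const hVq.measurableSet]
  exact ENNReal.mul_pos
    ((hVo.preimage continuous_subtype_val).measure_ne_zero ν ⟨1, hV1⟩)
    (hVq.measure_ne_zero ρ ⟨_, 1, hV1, rfl⟩)

theorem isMulLeftInvariant_measure [N.Normal] [ρ.IsMulLeftInvariant] :
    (content ν ρ).measure.IsMulLeftInvariant := by
  rw [← forall_measure_preimage_mul_iff]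
  intro g A hA
  rw [Content.measure_apply _ (measurable_const_mul g hA), Content.measure_apply _ hA]
  exact Content.is_mul_left_invariant_outerMeasure _ (fun g K => content_map_mul_left ν ρ g K) g A

end Content

end Weil

namespace MeasureTheory.Measure

theorem eq_of_measure_eq_mul_measure_preimage_mul_right {G : Type*} [Group G]
    [TopologicalSpace G] [IsTopologicalGroup G] [LocallyCompactSpace G] [MeasurableSpace G]
    [BorelSpace G] (μ μ' : Measure G) [μ.IsHaarMeasure] [IsFiniteMeasureOnCompacts μ']
    [μ'.IsMulLeftInvariant] {U : Set G} (hU : IsCompact (closure U)) (hU₀ : μ' U ≠ 0) {s : G}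
    {a b : ℝ≥0∞} (ha : μ U = a * μ ((· * s) ⁻¹' U)) (hb : μ' U = b * μ' ((· * s) ⁻¹' U)) :
    a = b := by
  set U' := (· * s) ⁻¹' U
  have hU' : IsCompact (closure U') := by
    rw [show U' = Homeomorph.mulRight s ⁻¹' U from rfl, ← Homeomorph.preimage_closure]
    exact (Homeomorph.mulRight s).isCompact_preimage.2 hU
  have hU'₀ : μ' U' ≠ 0 := fun h => hU₀ (by rw [hb, h, mul_zero])
  have hU'top : μ' U' ≠ ∞ := ((measure_mono subset_closure).trans_lt hU'.measure_lt_top).ne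
  have hμ' : ∀ V : Set G, IsCompact (closure V) → μ' V = haarScalarFactor μ' μ * μ V :=
    fun V hV => measure_isMulInvariant_eq_smul_of_isCompact_closure μ' μ hV
  refine (ENNReal.mul_left_inj hU'₀ hU'top).1 ?_
  calc a * μ' U' = haarScalarFactor μ' μ * μ U := by rw [hμ' U' hU', ha, mul_left_comm]
    _ = b * μ' U' := by rw [← hμ' U hU, hb]

end MeasureTheory.Measure

theorem modularFunction_restrict_of_normal {G : Type*} [Group G] [TopologicalSpace G]
    [IsTopologicalGroup G] [LocallyCompactSpace G] [T2Space G] [MeasurableSpace G]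
    [BorelSpace G] (μ : Measure G) [μ.IsHaarMeasure] (Δ : G →* ℝ≥0)
    (hΔ : ∀ s : G, Measure.map (· * s) μ = (Δ s)⁻¹ • μ)
    (N : Subgroup G) [N.Normal] (hN : IsClosed (N : Set G))
    (ν : Measure N) [ν.IsHaarMeasure] [ν.Regular]
    (ΔN : N →* ℝ≥0) (hΔN : ∀ n : N, Measure.map (· * n) ν = (ΔN n)⁻¹ • ν) (n : N) :
    Δ n = ΔN n := by
  have : IsClosed (N : Set G) := hN
  borelize (G ⧸ N)
  obtain ⟨ρ, _⟩ : ∃ ρ : Measure (G ⧸ N), ρ.IsHaarMeasure := ⟨Measure.haar, inferInstance⟩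
  set τ := Weil.content ν ρ
  have := Weil.isMulLeftInvariant_measure ν ρ
  obtain ⟨C, hC, hC1⟩ := exists_compact_mem_nhds (1 : G)
  obtain ⟨U, hUo, hCU, hU⟩ := exists_isOpen_superset_and_isCompact_closure hC
  set V := (· * (n : G)⁻¹) ⁻¹' U
  have hVo : IsOpen V := hUo.preimage (continuous_mul_const _)
  have hτ_open : ∀ W (hW : IsOpen W), τ.measure W = τ.innerContent ⟨W, hW⟩ := fun W hW => by
    rw [Content.measure_apply _ hW.measurableSet, Content.outerMeasure_of_isOpen _ _ hW]
  have hU₀ : τ.measure U ≠ 0 := by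
    refine ((Weil.content_pos ν ρ (K := ⟨C, hC⟩) hC1).trans_le ?_).ne'
    rw [Content.measure_apply _ hUo.measurableSet]
    exact (τ.le_outerMeasure_compacts _).trans (measure_mono hCU)
  have hμU : μ U = ((Δ n)⁻¹ : ℝ≥0) * μ V := by
    have hUV : (· * (n : G)) ⁻¹' V = U := by ext; simp [V]
    calc μ U = Measure.map (· * (n : G)) μ V := by
          rw [Measure.map_apply (measurable_mul_const _) hVo.measurableSet, hUV]
      _ = ((Δ n)⁻¹ : ℝ≥0) * μ V := by rw [hΔ]; rfl
  have hτU : τ.measure U = ((ΔN n)⁻¹ : ℝ≥0) * τ.measure V := by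
    rw [hτ_open U hUo, hτ_open V hVo, ← τ.mul_innerContent_comap_of_map_eq_mul
      (Homeomorph.mulRight (n : G)⁻¹) (Weil.content_map_mul_right_inv ν ρ (hΔN n))]
    rfl
  have := Measure.eq_of_measure_eq_mul_measure_preimage_mul_right μ τ.measure hU hU₀ hμU hτU
  simpa using this

theorem closed_normal_subgroup_of_almost_unimodular_is_almost_unimodular_general
    {G : Type*} [Group G] [TopologicalSpace G] [IsTopologicalGroup G]
    [LocallyCompactSpace G] [T2Space G] [MeasurableSpace G] [BorelSpace G]
    (μ : Measure G) [μ.IsHaarMeasure]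
    (Δ : G →* ℝ≥0)
    (hΔ : ∀ s : G, Measure.map (· * s) μ = (Δ s)⁻¹ • μ)
    (hGau : IsOpen (Δ.ker : Set G))
    (N : Subgroup G) [N.Normal] (hNclosed : IsClosed (N : Set G))
    (ν : Measure N) [ν.IsHaarMeasure] [ν.Regular]
    (ΔN : N →* ℝ≥0)
    (hΔN : ∀ n : N, Measure.map (· * n) ν = (ΔN n)⁻¹ • ν) :
    IsOpen (ΔN.ker : Set N) := by
  have hker : (ΔN.ker : Set N) = Subtype.val ⁻¹' (Δ.ker : Set G) := by
    ext n
    simp [modularFunction_restrict_of_normal μ Δ hΔ N hNclosed ν ΔN hΔN n]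
  rw [hker]
  exact hGau.preimage continuous_subtype_val

/-- A closed normal subgroup `N` of an almost unimodular locally compact group
`G` is itself almost unimodular: the kernel of the modular function `Δ_N` of `N` is open. -/
theorem closed_normal_subgroup_of_almost_unimodular_is_almost_unimodular
    {G : Type*} [Group G] [TopologicalSpace G] [IsTopologicalGroup G]
    [LocallyCompactSpace G] [T2Space G] [MeasurableSpace G] [BorelSpace G]
    (μ : Measure G) [μ.IsHaarMeasure] [μ.Regular]
    (Δ : G →* ℝ≥0) (hΔc : Continuous Δ) (hΔpos : ∀ s, 0 < Δ s)
    (hΔ : ∀ s : G, Measure.map (· * s) μ = (Δ s)⁻¹ • μ)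
    (hGau : IsOpen (Δ.ker : Set G))
    (N : Subgroup G) [N.Normal] (hNclosed : IsClosed (N : Set G))
    (ν : Measure N) [ν.IsHaarMeasure] [ν.Regular]
    (ΔN : N →* ℝ≥0) (hΔNc : Continuous ΔN) (hΔNpos : ∀ n, 0 < ΔN n)
    (hΔN : ∀ n : N, Measure.map (· * n) ν = (ΔN n)⁻¹ • ν) :
    IsOpen (ΔN.ker : Set N) :=
  closed_normal_subgroup_of_almost_unimodular_is_almost_unimodular_general μ Δ hΔ hGau N hNclosed ν
    ΔN hΔN
end

section
/- Let G be an almost unimodular group, H ≤ G a closed subgroup, and ρ : G → (0,∞) a rho-function for the pair (G,H), i.e., a continuous function with ρ(st) = (Δ_H(t)/Δ_G(t)) ρ(s) for all s ∈ G, t ∈ H. Then H is almost unimodular if and only if {t ∈ H : ρ(t) = ρ(e)} is open in H. -/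
open MeasureTheory
open scoped NNReal

/-! Write `χ = Δ_H / Δ_G` on `H`, a character. The rho-relation at `s = e` gives
`ρ(t) = χ(t) ρ(e)`, so the level set is `ker χ`. On the open subgroup `H ∩ ker Δ_G` the
characters `χ` and `Δ_H` agree, so `ker χ` and `ker Δ_H` meet it in the same subgroup, and a
subgroup is open iff it contains an open subgroup. -/

@[simps]
def MonoidHom.pointwiseDiv {M N : Type*} [MulOneClass M] [DivisionCommMonoid N]
    (f g : M →* N) : M →* N where
  toFun x := f x / g x
  map_one' := by simp
  map_mul' x y := by simp only [map_mul, mul_div_mul_comm]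

theorem MonoidHom.pointwiseDiv_eq_of_eq_one {M N : Type*} [MulOneClass M]
    [DivisionCommMonoid N] (f g : M →* N) {x : M} (hx : g x = 1) :
    f.pointwiseDiv g x = f x := by
  simp [hx]

theorem Subgroup.isOpen_iff_of_inf_eq {G : Type*} [Group G] [TopologicalSpace G]
    [SeparatelyContinuousMul G] {A B K : Subgroup G} (hK : IsOpen (K : Set G))
    (h : A ⊓ K = B ⊓ K) : IsOpen (A : Set G) ↔ IsOpen (B : Set G) := by
  have key : ∀ {A B : Subgroup G}, A ⊓ K = B ⊓ K → IsOpen (A : Set G) → IsOpen (B : Set G) :=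
    fun h hA => Subgroup.isOpen_mono (h.trans_le inf_le_left) (hA.inter hK)
  exact ⟨key h, key h.symm⟩

theorem MonoidHom.ker_eq_setOf_eq_apply_one {H : Type*} [Group H] (χ : H →* ℝ≥0) (ρ : H → ℝ)
    (hρ : ∀ t, ρ t = χ t * ρ 1) (hρ1 : ρ 1 ≠ 0) : χ.ker = {t | ρ t = ρ 1} := by
  ext t
  rw [SetLike.mem_coe, MonoidHom.mem_ker, Set.mem_ofPred_eq, hρ t, mul_left_eq_self₀]
  simp [hρ1]

theorem subgroup_almost_unimodular_iff_rho_level_set_open_general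
    {G : Type*} [Group G] [TopologicalSpace G] [IsTopologicalGroup G]
    (Δ : G →* ℝ≥0)
    (hGau : IsOpen (Δ.ker : Set G))
    (H : Subgroup G)
    (ΔH : H →* ℝ≥0)
    (ρ : G → ℝ) (hρpos : ∀ s, 0 < ρ s)
    (hρ : ∀ (s : G) (t : H), ρ (s * t) = ((ΔH t : ℝ) / (Δ (t : G) : ℝ)) * ρ s) :
    IsOpen (ΔH.ker : Set H) ↔ IsOpen {t : H | ρ (t : G) = ρ 1} := by
  set χ := ΔH.pointwiseDiv (Δ.comp H.subtype)
  set K := Δ.ker.comap H.subtype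
  have hK : IsOpen (K : Set H) := hGau.preimage continuous_subtype_val
  have hχK : ΔH.ker ⊓ K = χ.ker ⊓ K := by
    ext t
    simp only [Subgroup.mem_inf, MonoidHom.mem_ker, Subgroup.mem_comap, K]
    refine and_congr_left fun ht => ?_
    rw [show χ t = ΔH t from ΔH.pointwiseDiv_eq_of_eq_one _ ht]
  have hlevel : χ.ker = {t : H | ρ (t : G) = ρ 1} :=
    χ.ker_eq_setOf_eq_apply_one (fun t => ρ t)
      (fun t => by simpa [χ] using hρ 1 t) (hρpos 1).ne'
  rw [Subgroup.isOpen_iff_of_inf_eq hK hχK, ← hlevel]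

/-- Let `G` be almost unimodular, `H ≤ G` a closed subgroup, and
`ρ : G → (0,∞)` a rho-function for `(G,H)`, i.e. continuous, strictly positive, with
`ρ(st) = (Δ_H(t)/Δ_G(t)) ρ(s)` for `s ∈ G`, `t ∈ H`. Then `H` is almost unimodular iff
`{t ∈ H : ρ(t) = ρ(e)}` is open in `H`. -/
theorem subgroup_almost_unimodular_iff_rho_level_set_open
    {G : Type*} [Group G] [TopologicalSpace G] [IsTopologicalGroup G]
    [LocallyCompactSpace G] [T2Space G] [MeasurableSpace G] [BorelSpace G]
    (μ : Measure G) [μ.IsHaarMeasure] [μ.Regular]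
    (Δ : G →* ℝ≥0) (hΔc : Continuous Δ) (hΔpos : ∀ s, 0 < Δ s)
    (hΔ : ∀ s : G, Measure.map (· * s) μ = (Δ s)⁻¹ • μ)
    (hGau : IsOpen (Δ.ker : Set G))
    (H : Subgroup G) (hHclosed : IsClosed (H : Set G))
    (ν : Measure H) [ν.IsHaarMeasure] [ν.Regular]
    (ΔH : H →* ℝ≥0) (hΔHc : Continuous ΔH) (hΔHpos : ∀ t, 0 < ΔH t)
    (hΔH : ∀ t : H, Measure.map (· * t) ν = (ΔH t)⁻¹ • ν)
    (ρ : G → ℝ) (hρc : Continuous ρ) (hρpos : ∀ s, 0 < ρ s)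
    (hρ : ∀ (s : G) (t : H), ρ (s * t) = ((ΔH t : ℝ) / (Δ (t : G) : ℝ)) * ρ s) :
    IsOpen (ΔH.ker : Set H) ↔ IsOpen {t : H | ρ (t : G) = ρ 1} :=
  subgroup_almost_unimodular_iff_rho_level_set_open_general Δ hGau H ΔH ρ hρpos hρ
end

section
/- Let G be a locally compact group with closed normal subgroup N, and let φ : G → (0,∞) be the continuous homomorphism φ(s) = d(μ_N ∘ Ad_s)/dμ_N (the constant Radon–Nikodym derivative of the pushforward of the Haar measure of N under conjugation by s). Then any two of the following imply the third: (i) ker Δ_G is open in G; (ii) ker Δ_{G/N} is open in G/N; (iii) ker φ is open in G. -/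
/-!
The iterated integral `J f = ∫_{G/N} ∫_N f (x n) dν(n) dμq(x)` is a left invariant functional on
compactly supported continuous functions which commutes with integrals over `G`; the argument that
proves uniqueness of Haar measure therefore shows `J f * ∫ g dμ = ∫ f dμ * J g`. Right translation
by `t` multiplies `J` by `φ t⁻¹ * Δq(tN)⁻¹` (conjugation in the fibres, then translation in `G/N`)
and `∫ · dμ` by `Δ t⁻¹`, so `Δ t = Δq(tN) * φ t`. Then the intersection of any two of the three
kernels lies in the third, and `ker Δq` is open exactly when its preimage in `G` is.
-/

open MeasureTheory
open scoped NNReal Pointwise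

theorem MeasurableEmbedding.integral_comp_of_map_eq_smul {α β : Type*} [MeasurableSpace α]
    [MeasurableSpace β] {μ : Measure α} {ν : Measure β} {e : α → β} (he : MeasurableEmbedding e)
    {c : ℝ≥0} (h : μ.map e = c • ν) (f : β → ℝ) : ∫ x, f (e x) ∂μ = c * ∫ y, f y ∂ν := by
  rw [← he.integral_map, h, integral_smul_nnreal_measure, NNReal.smul_def, smul_eq_mul]

theorem MonoidHom.isOpen_ker_of_mul_eq {G M : Type*} [Group G] [TopologicalSpace G]
    [IsTopologicalGroup G] [Monoid M] {a b c : G →* M} (h : ∀ t, a t * b t = c t) :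
    (IsOpen (c.ker : Set G) → IsOpen (a.ker : Set G) → IsOpen (b.ker : Set G)) ∧
    (IsOpen (c.ker : Set G) → IsOpen (b.ker : Set G) → IsOpen (a.ker : Set G)) ∧
    (IsOpen (a.ker : Set G) → IsOpen (b.ker : Set G) → IsOpen (c.ker : Set G)) := by
  refine ⟨fun hc ha => Subgroup.isOpen_mono (H₁ := c.ker ⊓ a.ker) ?_ (hc.inter ha),
    fun hc hb => Subgroup.isOpen_mono (H₁ := c.ker ⊓ b.ker) ?_ (hc.inter hb),
    fun ha hb => Subgroup.isOpen_mono (H₁ := a.ker ⊓ b.ker) ?_ (ha.inter hb)⟩ <;>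
  rintro t ⟨h₁, h₂⟩ <;>
  simpa [MonoidHom.mem_ker.mp h₁, MonoidHom.mem_ker.mp h₂, eq_comm] using h t

section Subgroup

variable {G : Type*} [Group G] [TopologicalSpace G] [IsTopologicalGroup G]

def Subgroup.conjHomeomorph (N : Subgroup G) [N.Normal] (s : G) : N ≃ₜ N where
  toFun n := ⟨s * n * s⁻¹, ‹N.Normal›.conj_mem n n.2 s⟩
  invFun n := ⟨s⁻¹ * n * s, by simpa using ‹N.Normal›.conj_mem n n.2 s⁻¹⟩
  left_inv n := Subtype.ext (by simp [mul_assoc])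
  right_inv n := Subtype.ext (by simp [mul_assoc])
  continuous_toFun := by fun_prop
  continuous_invFun := by fun_prop

variable [MeasurableSpace G] [BorelSpace G]

theorem continuous_integral_of_mul_mem_isCompact {N : Subgroup G} (hN : IsClosed (N : Set G))
    (ν : Measure N) [IsFiniteMeasureOnCompacts ν] {X : Type*} [TopologicalSpace X]
    [LocallyCompactSpace X] {F : X → N → ℝ} (hF : Continuous (Function.uncurry F)) {κ : X → G}
    (hκ : Continuous κ) {T : Set G} (hT : IsCompact T) (hsupp : ∀ x n, F x n ≠ 0 → κ x * n ∈ T) :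
    Continuous fun x => ∫ n, F x n ∂ν := by
  refine continuous_iff_continuousAt.2 fun x₀ => ?_
  obtain ⟨U, hUc, hU⟩ := exists_compact_mem_nhds x₀
  have hL : IsCompact (Subtype.val ⁻¹' ((κ '' U)⁻¹ * T) : Set N) :=
    hN.isClosedEmbedding_subtypeVal.isProperMap.isCompact_preimage ((hUc.image hκ).inv.mul hT)
  refine (continuousOn_integral_of_compact_support hL hF.continuousOn
    fun x n hx hn => ?_).continuousAt hU
  by_contra h
  exact hn ⟨(κ x)⁻¹, Set.inv_mem_inv.2 (Set.mem_image_of_mem κ hx), κ x * n, hsupp x n h,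
    inv_mul_cancel_left _ _⟩

end Subgroup

section CosetIntegral

variable {G : Type*} [Group G] [TopologicalSpace G] [IsTopologicalGroup G] [MeasurableSpace G]
  {N : Subgroup G} (ν : Measure N)

noncomputable def cosetIntegral (f : G → ℝ) (x : G ⧸ N) : ℝ := ∫ n, f (x.out * n) ∂ν

theorem hasCompactSupport_cosetIntegral_uncurry [N.Normal] {Y : Type*} [TopologicalSpace Y]
    [R1Space Y] {H : G × Y → ℝ} (h'H : HasCompactSupport H) :
    HasCompactSupport fun p : (G ⧸ N) × Y => cosetIntegral ν (fun z => H (z, p.2)) p.1 := by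
  refine HasCompactSupport.intro
    (((h'H.image continuous_fst).image QuotientGroup.continuous_mk).prod
      (h'H.image continuous_snd)) ?_
  rintro ⟨x, y⟩ hxy
  have hzero : ∀ n : N, H (x.out * n, y) = 0 := fun n => by
    by_contra h
    have hmem := subset_tsupport H h
    exact hxy ⟨⟨_, ⟨_, hmem, rfl⟩, by simp [QuotientGroup.mk_mul_of_mem _ n.2]⟩, ⟨_, hmem, rfl⟩⟩
  simp [cosetIntegral, hzero]

variable [BorelSpace G] [ν.IsMulLeftInvariant]

theorem cosetIntegral_mk (f : G → ℝ) (s : G) :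
    cosetIntegral ν f s = ∫ n, f (s * n) ∂ν := by
  let m : N := ⟨s⁻¹ * (s : G ⧸ N).out, QuotientGroup.eq.mp (QuotientGroup.out_eq' _).symm⟩
  calc cosetIntegral ν f s = ∫ n, f (s * ↑(m * n)) ∂ν := by
        simp [cosetIntegral, m, mul_assoc]
    _ = ∫ n, f (s * n) ∂ν := integral_mul_left_eq_self (fun n : N => f (s * n)) m

theorem continuous_cosetIntegral_uncurry [IsFiniteMeasureOnCompacts ν] [LocallyCompactSpace G]
    (hN : IsClosed (N : Set G)) {Y : Type*} [TopologicalSpace Y] [LocallyCompactSpace Y]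
    {H : G × Y → ℝ} (hH : Continuous H) (h'H : HasCompactSupport H) :
    Continuous fun p : (G ⧸ N) × Y => cosetIntegral ν (fun z => H (z, p.2)) p.1 := by
  rw [← (QuotientGroup.isOpenQuotientMap_mk.prodMap IsOpenQuotientMap.id).continuous_comp_iff]
  have hmk : (fun p : (G ⧸ N) × Y => cosetIntegral ν (fun z => H (z, p.2)) p.1) ∘
      Prod.map QuotientGroup.mk id = fun p : G × Y => ∫ n, H (p.1 * n, p.2) ∂ν :=
    funext fun p => cosetIntegral_mk ν (fun z => H (z, p.2)) p.1
  rw [hmk]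
  exact continuous_integral_of_mul_mem_isCompact hN ν (F := fun p n => H (p.1 * n, p.2))
    (by fun_prop) continuous_fst (h'H.image continuous_fst)
    fun p n h => ⟨_, subset_tsupport H h, rfl⟩

variable [N.Normal]

theorem cosetIntegral_mul_left (f : G → ℝ) (a : G) (x : G ⧸ N) :
    cosetIntegral ν (fun z => f (a * z)) x = cosetIntegral ν f (a * x) := by
  induction x using QuotientGroup.induction_on with
  | H s => simp only [cosetIntegral_mk, ← QuotientGroup.mk_mul, mul_assoc]

theorem cosetIntegral_mul_right {t : G} {c : ℝ≥0} (hc : ν.map (N.conjHomeomorph t⁻¹) = c • ν)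
    (f : G → ℝ) (x : G ⧸ N) :
    cosetIntegral ν (fun z => f (z * t)) x = c * cosetIntegral ν f (x * t) := by
  induction x using QuotientGroup.induction_on with
  | H s =>
    rw [cosetIntegral_mk, ← QuotientGroup.mk_mul, cosetIntegral_mk,
      ← (N.conjHomeomorph t⁻¹).measurableEmbedding.integral_comp_of_map_eq_smul hc]
    congr 1 with n
    simp [Subgroup.conjHomeomorph, mul_assoc]

end CosetIntegral

section IteratedCosetIntegral

variable {G : Type*} [Group G] [MeasurableSpace G] {N : Subgroup G} [MeasurableSpace (G ⧸ N)]
  (μq : Measure (G ⧸ N)) (ν : Measure N)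

noncomputable def iteratedCosetIntegral (f : G → ℝ) : ℝ := ∫ x, cosetIntegral ν f x ∂μq

theorem iteratedCosetIntegral_const_mul (c : ℝ) (f : G → ℝ) :
    iteratedCosetIntegral μq ν (fun z => c * f z) = c * iteratedCosetIntegral μq ν f := by
  simp only [iteratedCosetIntegral, cosetIntegral, integral_const_mul]

variable [TopologicalSpace G] [IsTopologicalGroup G] [BorelSpace G] [N.Normal]
  [BorelSpace (G ⧸ N)] [ν.IsMulLeftInvariant]

theorem iteratedCosetIntegral_mul_left [μq.IsMulLeftInvariant] (f : G → ℝ) (a : G) :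
    iteratedCosetIntegral μq ν (fun z => f (a * z)) = iteratedCosetIntegral μq ν f := by
  simp only [iteratedCosetIntegral, cosetIntegral_mul_left]
  exact integral_mul_left_eq_self _ _

theorem iteratedCosetIntegral_mul_right {t : G} {c d : ℝ≥0}
    (hc : ν.map (N.conjHomeomorph t⁻¹) = c • ν) (hd : μq.map (· * (t : G ⧸ N)) = d • μq)
    (f : G → ℝ) :
    iteratedCosetIntegral μq ν (fun z => f (z * t)) = c * d * iteratedCosetIntegral μq ν f := by
  simp only [iteratedCosetIntegral, cosetIntegral_mul_right ν hc, integral_const_mul]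
  rw [(measurableEmbedding_mulRight _).integral_comp_of_map_eq_smul hd, mul_assoc]

variable [IsFiniteMeasureOnCompacts ν] [LocallyCompactSpace G]

theorem iteratedCosetIntegral_integral_swap [IsFiniteMeasureOnCompacts μq]
    (hN : IsClosed (N : Set G)) {Y : Type*} [TopologicalSpace Y] [LocallyCompactSpace Y]
    [R1Space Y] [MeasurableSpace Y] [OpensMeasurableSpace Y] (ρ : Measure Y)
    [IsFiniteMeasureOnCompacts ρ] {H : G × Y → ℝ} (hH : Continuous H) (h'H : HasCompactSupport H) :
    iteratedCosetIntegral μq ν (fun x => ∫ y, H (x, y) ∂ρ) =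
      ∫ y, iteratedCosetIntegral μq ν (fun x => H (x, y)) ∂ρ := by
  have hfiber (s : G) : ∫ n, ∫ y, H (s * n, y) ∂ρ ∂ν = ∫ y, ∫ n, H (s * n, y) ∂ν ∂ρ := by
    have h'F : HasCompactSupport fun p : N × Y => H (s * p.1, p.2) :=
      h'H.comp_isClosedEmbedding (((Homeomorph.mulLeft s).isClosedEmbedding.prodMap .id).comp
        (hN.isClosedEmbedding_subtypeVal.prodMap .id))
    exact integral_integral_swap_of_hasCompactSupport (f := fun (n : N) y => H (s * n, y))
      (by fun_prop) h'F
  calc iteratedCosetIntegral μq ν (fun x => ∫ y, H (x, y) ∂ρ)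
      = ∫ x, ∫ y, cosetIntegral ν (fun z => H (z, y)) x ∂ρ ∂μq := by
        unfold iteratedCosetIntegral
        congr 1 with x
        exact hfiber x.out
    _ = ∫ y, ∫ x, cosetIntegral ν (fun z => H (z, y)) x ∂μq ∂ρ :=
        integral_integral_swap_of_hasCompactSupport
          (continuous_cosetIntegral_uncurry ν hN hH h'H)
          (hasCompactSupport_cosetIntegral_uncurry ν h'H)

theorem iteratedCosetIntegral_pos [ν.IsOpenPosMeasure] [μq.IsOpenPosMeasure]
    [IsFiniteMeasureOnCompacts μq] (hN : IsClosed (N : Set G)) {g : G → ℝ} (hg : Continuous g)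
    (h'g : HasCompactSupport g) (g_nonneg : 0 ≤ g) {s : G} (hs : g s ≠ 0) :
    0 < iteratedCosetIntegral μq ν g := by
  have hH : HasCompactSupport fun p : G × Unit => g p.1 :=
    h'g.comp_homeomorph (Homeomorph.prodPUnit G)
  have hcont : Continuous (cosetIntegral ν g) :=
    (continuous_cosetIntegral_uncurry ν hN (hg.comp continuous_fst) hH).comp
      (continuous_id.prodMk (continuous_const (y := ())))
  have hsupp : HasCompactSupport (cosetIntegral ν g) :=
    (hasCompactSupport_cosetIntegral_uncurry ν hH).comp_homeomorph
      (Homeomorph.prodPUnit (G ⧸ N)).symm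
  refine hcont.integral_pos_of_hasCompactSupport_nonneg_nonzero hsupp
    (fun x => integral_nonneg fun n => g_nonneg _) (x := s) ?_
  rw [cosetIntegral_mk]
  refine (Continuous.integral_pos_of_hasCompactSupport_nonneg_nonzero
    (f := fun n : N => g (s * n)) (by fun_prop) ?_
    (fun n => g_nonneg _) (x := 1) (by simpa using hs)).ne'
  exact (h'g.comp_homeomorph (Homeomorph.mulLeft s)).comp_isClosedEmbedding
    hN.isClosedEmbedding_subtypeVal

end IteratedCosetIntegral

section LeftInvariantFunctional

variable {G : Type*} [Group G] [TopologicalSpace G] [IsTopologicalGroup G]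

theorem hasCompactSupport_mul_apply_inv_mul {u g : G → ℝ} (hu : HasCompactSupport u)
    (hg : HasCompactSupport g) : HasCompactSupport fun p : G × G => u p.1 * g (p.2⁻¹ * p.1) := by
  refine HasCompactSupport.intro (hu.isCompact.prod (hu.isCompact.mul hg.isCompact.inv)) ?_
  rintro ⟨x, y⟩ hxy
  by_contra hne
  obtain ⟨hux, hgy⟩ := mul_ne_zero_iff.mp hne
  exact hxy ⟨subset_tsupport u hux, ⟨x, subset_tsupport u hux, (y⁻¹ * x)⁻¹,
    Set.inv_mem_inv.2 (subset_tsupport g hgy), by group⟩⟩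

variable [MeasurableSpace G] [BorelSpace G]

theorem integral_apply_inv_mul_pos {ρ : Measure G} [ρ.IsOpenPosMeasure]
    [IsFiniteMeasureOnCompacts ρ] {g : G → ℝ} (hg : Continuous g) (h'g : HasCompactSupport g)
    (g_nonneg : 0 ≤ g) {x₀ : G} (g_pos : g x₀ ≠ 0) (x : G) : 0 < ∫ y, g (y⁻¹ * x) ∂ρ := by
  have hcont : Continuous fun y => g (y⁻¹ * x) := by fun_prop
  refine hcont.integral_pos_of_hasCompactSupport_nonneg_nonzero ?_ (fun y => g_nonneg (y⁻¹ * x))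
    (x := x * x₀⁻¹) (by simpa using g_pos)
  exact h'g.comp_homeomorph ((Homeomorph.inv G).trans (Homeomorph.mulRight x))

variable [LocallyCompactSpace G] {ρ : Measure G} [IsFiniteMeasureOnCompacts ρ]
  [ρ.IsMulRightInvariant] [ρ.IsOpenPosMeasure] {J : (G → ℝ) → ℝ}

/-- The proof of `Measure.integral_isMulLeftInvariant_isMulRightInvariant_combo`, run with an
abstract functional `J` in place of `f ↦ ∫ f ∂μ`. -/
theorem functional_eq_integral_mul_of_isMulLeftInvariant
    (hJ_left : ∀ f a, J (fun x => f (a * x)) = J f)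
    (hJ_smul : ∀ c f, J (fun x => c * f x) = c * J f)
    (hJ_swap : ∀ H : G × G → ℝ, Continuous H → HasCompactSupport H →
      J (fun x => ∫ y, H (x, y) ∂ρ) = ∫ y, J (fun x => H (x, y)) ∂ρ)
    {f g : G → ℝ} (hf : Continuous f) (h'f : HasCompactSupport f) (hg : Continuous g)
    (h'g : HasCompactSupport g) (g_nonneg : 0 ≤ g) {x₀ : G} (g_pos : g x₀ ≠ 0) :
    J f = (∫ y, f y * (∫ z, g (z⁻¹ * y) ∂ρ)⁻¹ ∂ρ) * J g := by
  set D : G → ℝ := fun x => ∫ y, g (y⁻¹ * x) ∂ρ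
  have D_pos : ∀ x, 0 < D x := integral_apply_inv_mul_pos hg h'g g_nonneg g_pos
  set u : G → ℝ := fun x => f x * (D x)⁻¹
  have hu : Continuous u :=
    hf.mul ((continuous_integral_apply_inv_mul hg h'g).inv₀ fun x => (D_pos x).ne')
  have h'u : HasCompactSupport u := h'f.mul_right
  have hF := hasCompactSupport_mul_apply_inv_mul h'u h'g
  have hF' : HasCompactSupport fun p : G × G => u (p.2 * p.1) * g p.1 := by
    convert hF.comp_homeomorph ((Homeomorph.prodComm G G).trans
      ((Homeomorph.shearMulRight G).trans (Homeomorph.prodComm G G))) using 1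
    ext p
    simp [u]
  calc J f = J (fun x => ∫ y, u x * g (y⁻¹ * x) ∂ρ) := by
        congr 1 with x
        rw [integral_const_mul, mul_assoc, inv_mul_cancel₀ (D_pos x).ne', mul_one]
    _ = ∫ y, J (fun x => u x * g (y⁻¹ * x)) ∂ρ := hJ_swap _ (by fun_prop) hF
    _ = ∫ y, J (fun x => u (y * x) * g x) ∂ρ := by
        congr 1 with y
        rw [← hJ_left _ y]
        simp only [inv_mul_cancel_left]
    _ = J (fun x => ∫ y, u (y * x) * g x ∂ρ) := (hJ_swap _ (by fun_prop) hF').symm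
    _ = J (fun x => (∫ y, u y ∂ρ) * g x) := by
        congr 1 with x
        rw [integral_mul_const, integral_mul_right_eq_self u x]
    _ = (∫ y, u y ∂ρ) * J g := hJ_smul _ g

theorem functional_mul_integral_eq_of_isMulLeftInvariant (μ : Measure G)
    [IsFiniteMeasureOnCompacts μ] [μ.IsMulLeftInvariant]
    (hJ_left : ∀ f a, J (fun x => f (a * x)) = J f)
    (hJ_smul : ∀ c f, J (fun x => c * f x) = c * J f)
    (hJ_swap : ∀ H : G × G → ℝ, Continuous H → HasCompactSupport H →
      J (fun x => ∫ y, H (x, y) ∂ρ) = ∫ y, J (fun x => H (x, y)) ∂ρ)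
    {f g : G → ℝ} (hf : Continuous f) (h'f : HasCompactSupport f) (hg : Continuous g)
    (h'g : HasCompactSupport g) (g_nonneg : 0 ≤ g) {x₀ : G} (g_pos : g x₀ ≠ 0) :
    J f * ∫ x, g x ∂μ = (∫ x, f x ∂μ) * J g := by
  rw [functional_eq_integral_mul_of_isMulLeftInvariant hJ_left hJ_smul hJ_swap hf h'f hg h'g
      g_nonneg g_pos,
    Measure.integral_isMulLeftInvariant_isMulRightInvariant_combo (ν := ρ) hf h'f hg h'g
      g_nonneg g_pos]
  ring

end LeftInvariantFunctional

theorem modular_eq_quotient_modular_mul {G : Type*} [Group G] [TopologicalSpace G]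
    [IsTopologicalGroup G] [LocallyCompactSpace G] [MeasurableSpace G] [BorelSpace G]
    (μ : Measure G) [μ.IsHaarMeasure] (Δ : G →* ℝ≥0) (hΔ : ∀ s, μ.map (· * s) = (Δ s)⁻¹ • μ)
    {N : Subgroup G} [N.Normal] (hN : IsClosed (N : Set G)) (ν : Measure N) [ν.IsHaarMeasure]
    (φ : G →* ℝ≥0) (hφ : ∀ s, ν.map (N.conjHomeomorph s) = φ s • ν)
    [MeasurableSpace (G ⧸ N)] [BorelSpace (G ⧸ N)] (μq : Measure (G ⧸ N)) [μq.IsHaarMeasure]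
    (Δq : G ⧸ N →* ℝ≥0) (hΔq : ∀ x, μq.map (· * x) = (Δq x)⁻¹ • μq) (t : G) :
    Δq t * φ t = Δ t := by
  obtain ⟨⟨g, hg⟩, h'g, g_nonneg, g_ne⟩ := exists_continuous_nonneg_pos (1 : G)
  have hJg : 0 < iteratedCosetIntegral μq ν g :=
    iteratedCosetIntegral_pos μq ν hN hg h'g g_nonneg g_ne
  have hμg : 0 < ∫ x, g x ∂μ :=
    hg.integral_pos_of_hasCompactSupport_nonneg_nonzero h'g g_nonneg g_ne
  have hcomp := functional_mul_integral_eq_of_isMulLeftInvariant (ρ := μ.inv) μ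
    (iteratedCosetIntegral_mul_left μq ν) (iteratedCosetIntegral_const_mul μq ν)
    (fun H => iteratedCosetIntegral_integral_swap μq ν hN μ.inv) (f := fun x => g (x * t))
    (by fun_prop) (h'g.comp_homeomorph (Homeomorph.mulRight t)) hg h'g g_nonneg g_ne
  rw [iteratedCosetIntegral_mul_right μq ν (hφ t⁻¹) (hΔq t),
    (measurableEmbedding_mulRight t).integral_comp_of_map_eq_smul (hΔ t)] at hcomp
  have hinv : ((φ t⁻¹ * (Δq t)⁻¹ : ℝ≥0) : ℝ) = ((Δ t)⁻¹ : ℝ≥0) := by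
    apply mul_right_cancel₀ (mul_ne_zero hJg.ne' hμg.ne')
    push_cast at hcomp ⊢
    linear_combination hcomp
  rw [NNReal.coe_inj, map_inv, ← mul_inv, inv_inj] at hinv
  rw [mul_comm, hinv]

theorem two_of_three_open_kernels_quotient_general
    {G : Type*} [Group G] [TopologicalSpace G] [IsTopologicalGroup G]
    [LocallyCompactSpace G] [MeasurableSpace G] [BorelSpace G]
    (μ : Measure G) [μ.IsHaarMeasure]
    (Δ : G →* ℝ≥0)
    (hΔ : ∀ s : G, Measure.map (· * s) μ = (Δ s)⁻¹ • μ)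
    (N : Subgroup G) (hN : N.Normal) (hNclosed : IsClosed (N : Set G))
    (ν : Measure N) [ν.IsHaarMeasure]
    (φ : G →* ℝ≥0)
    (hφ : ∀ s : G,
      Measure.map (fun n : N => (⟨s * (n : G) * s⁻¹, hN.conj_mem (n : G) n.2 s⟩ : N)) ν
        = (φ s) • ν)
    [MeasurableSpace (G ⧸ N)] [BorelSpace (G ⧸ N)]
    (μq : Measure (G ⧸ N)) [μq.IsHaarMeasure]
    (Δq : G ⧸ N →* ℝ≥0)
    (hΔq : ∀ x : G ⧸ N, Measure.map (· * x) μq = (Δq x)⁻¹ • μq) :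
    (IsOpen (Δ.ker : Set G) → IsOpen (Δq.ker : Set (G ⧸ N)) → IsOpen (φ.ker : Set G)) ∧
    (IsOpen (Δ.ker : Set G) → IsOpen (φ.ker : Set G) → IsOpen (Δq.ker : Set (G ⧸ N))) ∧
    (IsOpen (Δq.ker : Set (G ⧸ N)) → IsOpen (φ.ker : Set G) → IsOpen (Δ.ker : Set G)) := by
  have hrel (t : G) : (Δq.comp (QuotientGroup.mk' N)) t * φ t = Δ t :=
    modular_eq_quotient_modular_mul μ Δ hΔ hNclosed ν φ hφ μq Δq hΔq t
  rw [← (QuotientGroup.isQuotientMap_mk N).isOpen_preimage]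
  exact MonoidHom.isOpen_ker_of_mul_eq hrel

/-- Let `N ⊴ G` be a closed normal subgroup and let `φ : G → (0,∞)` be the
continuous homomorphism given by the (constant) Radon–Nikodym derivative of the pushforward
of a Haar measure `ν` of `N` under conjugation by `s`. With `Δ_G` and `Δ_{G/N}` the modular
functions of `G` and `G/N`, any two of the following imply the third:
(i) `ker Δ_G` is open; (ii) `ker Δ_{G/N}` is open; (iii) `ker φ` is open. -/
theorem two_of_three_open_kernels_quotient
    {G : Type*} [Group G] [TopologicalSpace G] [IsTopologicalGroup G]
    [LocallyCompactSpace G] [T2Space G] [MeasurableSpace G] [BorelSpace G]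
    (μ : Measure G) [μ.IsHaarMeasure] [μ.Regular]
    (Δ : G →* ℝ≥0) (hΔc : Continuous Δ) (hΔpos : ∀ s, 0 < Δ s)
    (hΔ : ∀ s : G, Measure.map (· * s) μ = (Δ s)⁻¹ • μ)
    (N : Subgroup G) (hN : N.Normal) (hNclosed : IsClosed (N : Set G))
    (ν : Measure N) [ν.IsHaarMeasure] [ν.Regular]
    (φ : G →* ℝ≥0) (hφc : Continuous φ) (hφpos : ∀ s, 0 < φ s)
    (hφ : ∀ s : G,
      Measure.map (fun n : N => (⟨s * (n : G) * s⁻¹, hN.conj_mem (n : G) n.2 s⟩ : N)) ν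
        = (φ s) • ν)
    [MeasurableSpace (G ⧸ N)] [BorelSpace (G ⧸ N)]
    (μq : Measure (G ⧸ N)) [μq.IsHaarMeasure] [μq.Regular]
    (Δq : G ⧸ N →* ℝ≥0) (hΔqc : Continuous Δq) (hΔqpos : ∀ x, 0 < Δq x)
    (hΔq : ∀ x : G ⧸ N, Measure.map (· * x) μq = (Δq x)⁻¹ • μq) :
    (IsOpen (Δ.ker : Set G) → IsOpen (Δq.ker : Set (G ⧸ N)) → IsOpen (φ.ker : Set G)) ∧
    (IsOpen (Δ.ker : Set G) → IsOpen (φ.ker : Set G) → IsOpen (Δq.ker : Set (G ⧸ N))) ∧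
    (IsOpen (Δq.ker : Set (G ⧸ N)) → IsOpen (φ.ker : Set G) → IsOpen (Δ.ker : Set G)) :=
  two_of_three_open_kernels_quotient_general μ Δ hΔ N hN hNclosed ν φ hφ μq Δq hΔq
end

section
/- Let G be a locally compact group with a compact closed normal subgroup N. Then G is almost unimodular if and only if G/N is almost unimodular. -/
/-!
Right translation rescales every Haar measure by the same factor, the modular character, so `Δ`
and `Δq` are the modular characters of `G` and `G ⧸ N` (up to inversion). Since `N` is compact,
the quotient map `π : G → G ⧸ N` is proper, hence pushes a Haar measure of `G` forward to one of
`G ⧸ N`, intertwining right translations by `g` and `π g`. Therefore `Δ = Δq ∘ π`, and `ker Δ` is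
the preimage of `ker Δq` under the quotient map `π`: one is open iff the other is.
-/

open MeasureTheory Filter
open scoped NNReal

namespace QuotientGroup

variable {G : Type*} [Group G] [TopologicalSpace G] {N : Subgroup G}

theorem isOpen_ker_comp_mk'_iff [N.Normal] {M : Type*} [MulOneClass M] (φ : G ⧸ N →* M) :
    IsOpen ((φ.comp (mk' N)).ker : Set G) ↔ IsOpen (φ.ker : Set (G ⧸ N)) :=
  (isQuotientMap_mk N).isOpen_preimage (s := (φ.ker : Set (G ⧸ N)))

variable [IsTopologicalGroup G]

theorem isProperMap_mk (hN : IsCompact (N : Set G)) : IsProperMap (mk : G → G ⧸ N) := by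
  refine isProperMap_iff_isClosedMap_and_compact_fibers.2
    ⟨continuous_mk, isClosedMap_coe hN, fun y => ?_⟩
  obtain ⟨g, rfl⟩ := mk_surjective y
  rw [← Set.image_singleton, preimage_image_mk_eq_mul]
  exact isCompact_singleton.mul hN

theorem tendsto_mk_cocompact (hN : IsCompact (N : Set G)) :
    Tendsto (mk : G → G ⧸ N) (cocompact G) (cocompact (G ⧸ N)) :=
  hasBasis_cocompact.tendsto_right_iff.2 fun _ hK =>
    ((isProperMap_mk hN).isCompact_preimage hK).compl_mem_cocompact

theorem isHaarMeasure_map_mk [N.Normal] [MeasurableSpace G] [BorelSpace G]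
    [MeasurableSpace (G ⧸ N)] [BorelSpace (G ⧸ N)] (μ : Measure G) [μ.IsHaarMeasure]
    (hN : IsCompact (N : Set G)) : (μ.map (mk : G → G ⧸ N)).IsHaarMeasure :=
  μ.isHaarMeasure_map (mk' N) continuous_mk (mk'_surjective N) (tendsto_mk_cocompact hN)

end QuotientGroup

namespace MeasureTheory.Measure

variable {G : Type*} [Group G] [TopologicalSpace G] [IsTopologicalGroup G] [LocallyCompactSpace G]

theorem eq_modularCharacter_of_map_mul_right_eq_smul [MeasurableSpace G] [BorelSpace G]
    {μ : Measure G} [IsHaarMeasure μ] {g : G} {c : ℝ≥0} (h : map (· * g) μ = c • μ) :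
    c = modularCharacter g := by
  simp only [modularCharacter, MonoidHom.coe_mk, OneHom.coe_mk,
    modularCharacterFun_eq_haarScalarFactor μ, h, haarScalarFactor_smul, haarScalarFactor_self,
    smul_eq_mul, mul_one]

theorem map_mul_right_eq_modularCharacter_smul [MeasurableSpace G] [BorelSpace G]
    (μ : Measure G) [IsHaarMeasure μ] [μ.Regular] (g : G) :
    map (· * g) μ = modularCharacter g • μ := by
  have : (map (· * g) μ).Regular := Regular.map (Homeomorph.mulRight g)
  rw [modularCharacter, MonoidHom.coe_mk, OneHom.coe_mk,
    modularCharacterFun_eq_haarScalarFactor μ]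
  exact isMulLeftInvariant_eq_smul_of_regular _ μ

theorem modularCharacter_quotientGroup_mk {N : Subgroup G} [N.Normal]
    (hN : IsCompact (N : Set G)) (g : G) :
    modularCharacter (g : G ⧸ N) = modularCharacter g := by
  borelize G (G ⧸ N)
  have := QuotientGroup.isHaarMeasure_map_mk (haar : Measure G) hN
  have hmk : Measurable (QuotientGroup.mk : G → G ⧸ N) := QuotientGroup.continuous_mk.measurable
  refine (eq_modularCharacter_of_map_mul_right_eq_smul (μ := map QuotientGroup.mk haar) ?_).symm
  calc map (· * (g : G ⧸ N)) (map QuotientGroup.mk haar)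
      = map QuotientGroup.mk (map (· * g) (haar : Measure G)) := by
        rw [map_map (measurable_mul_const _) hmk, map_map hmk (measurable_mul_const g)]
        rfl
    _ = modularCharacter g • map QuotientGroup.mk haar := by
        rw [map_mul_right_eq_modularCharacter_smul, Measure.map_smul]

end MeasureTheory.Measure

theorem almost_unimodular_iff_quotient_by_compact_normal_general
    {G : Type*} [Group G] [TopologicalSpace G] [IsTopologicalGroup G]
    [LocallyCompactSpace G] [MeasurableSpace G] [BorelSpace G]
    (μ : Measure G) [μ.IsHaarMeasure]
    (Δ : G →* ℝ≥0)
    (hΔ : ∀ s : G, Measure.map (· * s) μ = (Δ s)⁻¹ • μ)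
    (N : Subgroup G) [N.Normal]
    (hNcompact : IsCompact (N : Set G))
    [MeasurableSpace (G ⧸ N)] [BorelSpace (G ⧸ N)]
    (μq : Measure (G ⧸ N)) [μq.IsHaarMeasure]
    (Δq : G ⧸ N →* ℝ≥0)
    (hΔq : ∀ x : G ⧸ N, Measure.map (· * x) μq = (Δq x)⁻¹ • μq) :
    IsOpen (Δ.ker : Set G) ↔ IsOpen (Δq.ker : Set (G ⧸ N)) := by
  have hΔ_factor : Δ = Δq.comp (QuotientGroup.mk' N) := MonoidHom.ext fun s => by
    have h := Measure.eq_modularCharacter_of_map_mul_right_eq_smul (hΔ s)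
    have hq := Measure.eq_modularCharacter_of_map_mul_right_eq_smul (hΔq s)
    rw [Measure.modularCharacter_quotientGroup_mk hNcompact] at hq
    exact inv_injective (h.trans hq.symm)
  rw [hΔ_factor]
  exact QuotientGroup.isOpen_ker_comp_mk'_iff Δq

/-- For a locally compact group `G` with compact closed normal subgroup `N`,
`G` is almost unimodular iff `G/N` is almost unimodular (kernels of the respective modular
functions are open). -/
theorem almost_unimodular_iff_quotient_by_compact_normal
    {G : Type*} [Group G] [TopologicalSpace G] [IsTopologicalGroup G]
    [LocallyCompactSpace G] [T2Space G] [MeasurableSpace G] [BorelSpace G]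
    (μ : Measure G) [μ.IsHaarMeasure] [μ.Regular]
    (Δ : G →* ℝ≥0) (hΔc : Continuous Δ) (hΔpos : ∀ s, 0 < Δ s)
    (hΔ : ∀ s : G, Measure.map (· * s) μ = (Δ s)⁻¹ • μ)
    (N : Subgroup G) [N.Normal] (hNclosed : IsClosed (N : Set G))
    (hNcompact : IsCompact (N : Set G))
    [MeasurableSpace (G ⧸ N)] [BorelSpace (G ⧸ N)]
    (μq : Measure (G ⧸ N)) [μq.IsHaarMeasure] [μq.Regular]
    (Δq : G ⧸ N →* ℝ≥0) (hΔqc : Continuous Δq) (hΔqpos : ∀ x, 0 < Δq x)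
    (hΔq : ∀ x : G ⧸ N, Measure.map (· * x) μq = (Δq x)⁻¹ • μq) :
    IsOpen (Δ.ker : Set G) ↔ IsOpen (Δq.ker : Set (G ⧸ N)) :=
  almost_unimodular_iff_quotient_by_compact_normal_general μ Δ hΔ N hNcompact μq Δq hΔq
end

section
/- Let G be an almost unimodular group. Then the map H ↦ Δ_G(H) is a bijection between the set of closed subgroups H of G with ker Δ_G ≤ H ≤ G and the set of subgroups Γ of Δ_G(G), with inverse Γ ↦ Δ_G⁻¹(Γ). Moreover, every such intermediate closed subgroup H is normal in G. -/
open MeasureTheory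
open scoped NNReal

/-!
Since `Δ` is a homomorphism to a commutative monoid, a subgroup `H ⊇ ker Δ` is a union of fibres
of `Δ`, hence equal to `Δ⁻¹(Δ(H))` and normal. Conversely `Δ⁻¹(Γ)` is a subgroup containing
`ker Δ`; as `ker Δ` is open, so is every subgroup containing it, and open subgroups are closed.
-/

namespace MonoidHom

variable {G M : Type*} [Group G]

theorem preimage_image_eq_of_ker_le [Monoid M] (f : G →* M) {H : Subgroup G} (hH : f.ker ≤ H) :
    f ⁻¹' (f '' H) = H := by
  refine Set.Subset.antisymm ?_ (Set.subset_preimage_image _ _)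
  rintro x ⟨h, hh, hfx⟩
  have hx : x * h⁻¹ ∈ f.ker := by
    rw [mem_ker, map_mul, ← hfx, ← map_mul, mul_inv_cancel, map_one]
  simpa using H.mul_mem (hH hx) hh

theorem normal_of_ker_le [CommMonoid M] (f : G →* M) {H : Subgroup G} (hH : f.ker ≤ H) :
    H.Normal where
  conj_mem n hn g := by
    have hconj : f (g * n * g⁻¹) = f n := by
      rw [map_mul, map_mul, mul_right_comm, ← map_mul, mul_inv_cancel, map_one, one_mul]
    rw [← SetLike.mem_coe, ← f.preimage_image_eq_of_ker_le hH]
    exact ⟨n, hn, hconj.symm⟩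

def preimageSubgroup [DivisionMonoid M] (f : G →* M) (S : Set M) (one_mem : 1 ∈ S)
    (mul_mem : ∀ a ∈ S, ∀ b ∈ S, a * b ∈ S) (inv_mem : ∀ a ∈ S, a⁻¹ ∈ S) : Subgroup G where
  carrier := f ⁻¹' S
  one_mem' := by simpa using one_mem
  mul_mem' {a b} ha hb := by simpa using mul_mem (f a) ha (f b) hb
  inv_mem' {a} ha := by simpa using inv_mem (f a) ha

theorem ker_le_preimageSubgroup [DivisionMonoid M] (f : G →* M) (S : Set M) (one_mem : 1 ∈ S)
    (mul_mem : ∀ a ∈ S, ∀ b ∈ S, a * b ∈ S) (inv_mem : ∀ a ∈ S, a⁻¹ ∈ S) :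
    f.ker ≤ f.preimageSubgroup S one_mem mul_mem inv_mem := fun x hx => by
  simpa [preimageSubgroup, (mem_ker).1 hx] using one_mem

end MonoidHom

theorem Subgroup.isClosed_of_isOpen_le {G : Type*} [Group G] [TopologicalSpace G]
    [SeparatelyContinuousMul G] {K H : Subgroup G} (hKH : K ≤ H) (hK : IsOpen (K : Set G)) :
    IsClosed (H : Set G) :=
  H.isClosed_of_isOpen (Subgroup.isOpen_mono hKH hK)

theorem intermediate_closed_subgroups_biject_with_subgroups_of_image_general
    {G : Type*} [Group G] [TopologicalSpace G] [IsTopologicalGroup G]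
    (Δ : G →* ℝ≥0)
    (hGau : IsOpen (Δ.ker : Set G)) :
    (∀ H : Subgroup G, IsClosed (H : Set G) → Δ.ker ≤ H →
      H.Normal ∧ Δ ⁻¹' (Δ '' (H : Set G)) = (H : Set G)) ∧
    (∀ Γ : Set ℝ≥0, Γ ⊆ Set.range Δ → (1 : ℝ≥0) ∈ Γ →
      (∀ a ∈ Γ, ∀ b ∈ Γ, a * b ∈ Γ) → (∀ a ∈ Γ, a⁻¹ ∈ Γ) →
      ∃ H : Subgroup G, IsClosed (H : Set G) ∧ Δ.ker ≤ H ∧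
        (H : Set G) = Δ ⁻¹' Γ ∧ Δ '' (H : Set G) = Γ) := by
  refine ⟨fun H _ hker => ⟨Δ.normal_of_ker_le hker, Δ.preimage_image_eq_of_ker_le hker⟩, ?_⟩
  intro Γ hΓ one_mem mul_mem inv_mem
  have hker := Δ.ker_le_preimageSubgroup Γ one_mem mul_mem inv_mem
  exact ⟨_, Subgroup.isClosed_of_isOpen_le hker hGau, hker, rfl,
    Set.image_preimage_eq_of_subset hΓ⟩

/-- For an almost unimodular group `G`, the map `H ↦ Δ_G(H)` is a bijection
from the closed intermediate subgroups `ker Δ_G ≤ H ≤ G` onto the subgroups `Γ` of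
`Δ_G(G)`, with inverse `Γ ↦ Δ_G⁻¹(Γ)`; moreover every such intermediate closed subgroup is
normal in `G`.  The bijectivity is expressed by: `Δ⁻¹(Δ(H)) = H` for every closed
intermediate `H`, and for every subgroup `Γ ⊆ Δ(G)` of the positive reals there is a closed
intermediate subgroup `H` with underlying set `Δ⁻¹(Γ)` and image `Δ(H) = Γ`. -/
theorem intermediate_closed_subgroups_biject_with_subgroups_of_image
    {G : Type*} [Group G] [TopologicalSpace G] [IsTopologicalGroup G]
    [LocallyCompactSpace G] [T2Space G] [MeasurableSpace G] [BorelSpace G]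
    (μ : Measure G) [μ.IsHaarMeasure] [μ.Regular]
    (Δ : G →* ℝ≥0) (hΔc : Continuous Δ) (hΔpos : ∀ s, 0 < Δ s)
    (hΔ : ∀ s : G, Measure.map (· * s) μ = (Δ s)⁻¹ • μ)
    (hGau : IsOpen (Δ.ker : Set G)) :
    (∀ H : Subgroup G, IsClosed (H : Set G) → Δ.ker ≤ H →
      H.Normal ∧ Δ ⁻¹' (Δ '' (H : Set G)) = (H : Set G)) ∧
    (∀ Γ : Set ℝ≥0, Γ ⊆ Set.range Δ → (1 : ℝ≥0) ∈ Γ →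
      (∀ a ∈ Γ, ∀ b ∈ Γ, a * b ∈ Γ) → (∀ a ∈ Γ, a⁻¹ ∈ Γ) →
      ∃ H : Subgroup G, IsClosed (H : Set G) ∧ Δ.ker ≤ H ∧
        (H : Set G) = Δ ⁻¹' Γ ∧ Δ '' (H : Set G) = Γ) :=
  intermediate_closed_subgroups_biject_with_subgroups_of_image_general Δ hGau
end

section
/- Let H and N be locally compact groups with a continuous cocycle action (α, c) of H on N, and suppose H is discrete and N is almost unimodular. Then the cocycle semidirect product H ⋉_{(α,c)} N is almost unimodular. -/
/-!
For a normalized cocycle action `α 1 = id`, so `x ↦ e⁻¹ (1, x)` is a group homomorphism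
`ψ : N → P`; since `H` is discrete, the fibre `{1} × N` is open and `ψ` is an open embedding.
Pulling a Haar measure of `P` back along `ψ` gives a Haar measure of `N`, and right translation
by `x` scales it by `Δ (ψ x)⁻¹`; by uniqueness of Haar measure this factor is the modular
character of `N` at `x`, so `Δ ∘ ψ = ΔN`. Hence `ker Δ` contains the open subgroup `ψ (ker ΔN)`.
-/

open MeasureTheory Measure Topology
open scoped NNReal

namespace MeasureTheory.Measure

variable {G : Type*} [Group G] [TopologicalSpace G] [IsTopologicalGroup G]
  [MeasurableSpace G] [BorelSpace G]

theorem modularCharacterFun_eq_of_map_mul_right_eq_smul [LocallyCompactSpace G]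
    (μ : Measure G) [IsHaarMeasure μ] {g : G} {r : ℝ≥0} (h : map (· * g) μ = r • μ) :
    modularCharacterFun g = r := by
  simp only [modularCharacterFun_eq_haarScalarFactor μ, h, haarScalarFactor_smul,
    haarScalarFactor_self, smul_eq_mul, mul_one]

variable {P : Type*} [Group P] [TopologicalSpace P] [IsTopologicalGroup P]
  [MeasurableSpace P] [BorelSpace P]

theorem map_mul_right_comap_eq {f : G →* P} (hf : IsOpenEmbedding f) (μ : Measure P) (g : G) :
    map (· * g) (μ.comap f) = (map (· * f g) μ).comap f := by
  have hf' := hf.measurableEmbedding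
  ext s hs
  rw [map_apply (measurable_mul_const g) hs, hf'.comap_apply, hf'.comap_apply,
    map_apply (measurable_mul_const _) (hf'.measurableSet_image.2 hs)]
  congr 1
  ext p
  simp only [Set.mem_image, Set.mem_preimage]
  constructor
  · rintro ⟨x, hx, rfl⟩
    exact ⟨x * g, hx, by simp⟩
  · rintro ⟨x, hx, hxp⟩
    exact ⟨x * g⁻¹, by simpa using hx, by simp [hxp]⟩

theorem modularCharacterFun_eq_of_isOpenEmbedding [LocallyCompactSpace G] {f : G →* P}
    (hf : IsOpenEmbedding f) (μ : Measure P) [IsHaarMeasure μ] {g : G} {r : ℝ≥0}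
    (h : map (· * f g) μ = r • μ) : modularCharacterFun g = r := by
  have := IsHaarMeasure.comap (mH := inferInstance) μ hf
  refine modularCharacterFun_eq_of_map_mul_right_eq_smul (μ.comap f) ?_
  rw [map_mul_right_comap_eq hf, h]
  exact comap_smul (r : ENNReal)

end MeasureTheory.Measure

theorem MonoidHom.isOpen_ker_of_isOpen_ker_comp {N P M : Type*} [Group N] [TopologicalSpace N]
    [Group P] [TopologicalSpace P] [IsTopologicalGroup P] [MulOneClass M]
    {ψ : N →* P} (hψ : IsOpenEmbedding ψ) {χ : P →* M} (h : IsOpen ((χ.comp ψ).ker : Set N)) :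
    IsOpen (χ.ker : Set P) := by
  refine Subgroup.isOpen_mono (H₁ := (χ.comp ψ).ker.map ψ) ?_ ?_
  · rintro _ ⟨x, hx, rfl⟩
    exact hx
  · rw [Subgroup.coe_map]
    exact hψ.isOpenMap _ h

section Fiber

variable {H N P : Type*} [Group H] [TopologicalSpace H] [DiscreteTopology H]
  [Group N] [TopologicalSpace N] [Group P] [TopologicalSpace P]

def Homeomorph.oneFiberHom (e : P ≃ₜ H × N)
    (he : ∀ x y : N, e.symm (1, x * y) = e.symm (1, x) * e.symm (1, y)) : N →* P :=
  MonoidHom.mk' (fun x => e.symm (1, x)) he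

theorem Homeomorph.isOpenEmbedding_oneFiberHom (e : P ≃ₜ H × N)
    (he : ∀ x y : N, e.symm (1, x * y) = e.symm (1, x) * e.symm (1, y)) :
    IsOpenEmbedding (e.oneFiberHom he) := by
  refine e.symm.isOpenEmbedding.comp ⟨isEmbedding_prodMkRight 1, ?_⟩
  have hrange : Set.range (Prod.mk (1 : H) : N → H × N) = Prod.fst ⁻¹' {1} := by
    ext ⟨s, x⟩
    simp [eq_comm]
  exact hrange ▸ (isOpen_discrete _).preimage continuous_fst

end Fiber

theorem cocycle_action_one_eq_one {H N : Type*} [Group H] [Group N] {α : H → MulAut N} {c : H → H → N}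
    (hcocycle : ∀ s t : H, α s * α t = MulAut.conj (c s t) * α (s * t))
    (hnorm : ∀ s : H, c s 1 = 1) : α 1 = 1 := by
  simpa [hnorm] using hcocycle 1 1

theorem cocycle_semidirect_product_by_discrete_is_almost_unimodular_general
    {H : Type*} [Group H] [TopologicalSpace H] [DiscreteTopology H]
    {N : Type*} [Group N] [TopologicalSpace N] [IsTopologicalGroup N]
    [LocallyCompactSpace N] [MeasurableSpace N] [BorelSpace N]
    (ν : Measure N) [ν.IsHaarMeasure]
    (ΔN : N →* ℝ≥0)
    (hΔN : ∀ x : N, Measure.map (· * x) ν = (ΔN x)⁻¹ • ν)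
    (hNau : IsOpen (ΔN.ker : Set N))
    (α : H → MulAut N) (c : H → H → N)
    (hcocycle₁ : ∀ s t : H, (α s) * (α t) = (MulAut.conj (c s t)) * (α (s * t)))
    (hnorm₁ : ∀ s : H, c s 1 = 1)
    {P : Type*} [Group P] [TopologicalSpace P] [IsTopologicalGroup P]
    [MeasurableSpace P] [BorelSpace P]
    (μ : Measure P) [μ.IsHaarMeasure]
    (Δ : P →* ℝ≥0)
    (hΔ : ∀ g : P, Measure.map (· * g) μ = (Δ g)⁻¹ • μ)
    (e : P ≃ₜ H × N)
    (hmul : ∀ g₁ g₂ : P,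
      e (g₁ * g₂) = ((e g₁).1 * (e g₂).1,
        (c ((e g₂).1)⁻¹ ((e g₁).1)⁻¹)⁻¹ * α ((e g₂).1)⁻¹ (e g₁).2 * (e g₂).2)) :
    IsOpen (Δ.ker : Set P) := by
  have hα1 : α 1 = 1 := cocycle_action_one_eq_one hcocycle₁ hnorm₁
  have hfiber : ∀ x y : N, e.symm (1, x * y) = e.symm (1, x) * e.symm (1, y) := fun x y =>
    e.injective (by simp [hmul, hα1, hnorm₁])
  set ψ := e.oneFiberHom hfiber
  have hψ : IsOpenEmbedding ψ := e.isOpenEmbedding_oneFiberHom hfiber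
  have hΔψ : Δ.comp ψ = ΔN := by
    ext x : 1
    show Δ (ψ x) = ΔN x
    rw [← inv_inj, ← modularCharacterFun_eq_of_map_mul_right_eq_smul ν (hΔN x),
      ← modularCharacterFun_eq_of_isOpenEmbedding hψ μ (hΔ (ψ x))]
  exact MonoidHom.isOpen_ker_of_isOpen_ker_comp hψ (hΔψ ▸ hNau)

/-- Let `(α, c)` be a continuous cocycle action of a discrete group `H` on an
almost unimodular locally compact group `N` (with `α_s α_t = Ad_{c(s,t)} α_{st}`,
`c(s,t)c(st,r) = α_s(c(t,r)) c(s,tr)`, normalized).  Then the cocycle semidirect product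
`H ⋉_{(α,c)} N` — here any locally compact group `P` homeomorphic to `H × N` whose
multiplication is `(s,x)(t,y) = (st, c(t⁻¹,s⁻¹)⁻¹ α_{t⁻¹}(x) y)` under that
homeomorphism — is almost unimodular. -/
theorem cocycle_semidirect_product_by_discrete_is_almost_unimodular
    {H : Type*} [Group H] [TopologicalSpace H] [IsTopologicalGroup H]
    [LocallyCompactSpace H] [T2Space H] [DiscreteTopology H]
    {N : Type*} [Group N] [TopologicalSpace N] [IsTopologicalGroup N]
    [LocallyCompactSpace N] [T2Space N] [MeasurableSpace N] [BorelSpace N]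
    (ν : Measure N) [ν.IsHaarMeasure] [ν.Regular]
    (ΔN : N →* ℝ≥0) (hΔNc : Continuous ΔN) (hΔNpos : ∀ x, 0 < ΔN x)
    (hΔN : ∀ x : N, Measure.map (· * x) ν = (ΔN x)⁻¹ • ν)
    (hNau : IsOpen (ΔN.ker : Set N))
    (α : H → MulAut N) (c : H → H → N)
    (hαc : Continuous fun p : H × N => α p.1 p.2)
    (hcc : Continuous fun p : H × H => c p.1 p.2)
    (hcocycle₁ : ∀ s t : H, (α s) * (α t) = (MulAut.conj (c s t)) * (α (s * t)))
    (hcocycle₂ : ∀ s t r : H, c s t * c (s * t) r = α s (c t r) * c s (t * r))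
    (hnorm₁ : ∀ s : H, c s 1 = 1) (hnorm₂ : ∀ s : H, c 1 s = 1)
    {P : Type*} [Group P] [TopologicalSpace P] [IsTopologicalGroup P]
    [LocallyCompactSpace P] [T2Space P] [MeasurableSpace P] [BorelSpace P]
    (μ : Measure P) [μ.IsHaarMeasure] [μ.Regular]
    (Δ : P →* ℝ≥0) (hΔc : Continuous Δ) (hΔpos : ∀ g, 0 < Δ g)
    (hΔ : ∀ g : P, Measure.map (· * g) μ = (Δ g)⁻¹ • μ)
    (e : P ≃ₜ H × N)
    (hmul : ∀ g₁ g₂ : P,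
      e (g₁ * g₂) = ((e g₁).1 * (e g₂).1,
        (c ((e g₂).1)⁻¹ ((e g₁).1)⁻¹)⁻¹ * α ((e g₂).1)⁻¹ (e g₁).2 * (e g₂).2)) :
    IsOpen (Δ.ker : Set P) :=
  cocycle_semidirect_product_by_discrete_is_almost_unimodular_general ν ΔN hΔN hNau α c hcocycle₁
    hnorm₁ μ Δ hΔ e hmul
end

section
/- Let G be an almost unimodular group and H ≤ G a closed subgroup of finite covolume (i.e., G/H admits a finite nonzero G-invariant Radon measure μ_{G/H}). Then: (a) Δ_G restricted to H equals Δ_H; (b) H is almost unimodular; (c) Δ_H(H) is a finite index subgroup of Δ_G(G). -/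
/-!
Integrating the fibre measures `ν {h | g * h ∈ K}` over `G ⧸ H` against `μq` (Weil's formula)
gives a content on `G`. Invariance of `μq` makes it left invariant, and right translation by
`t ∈ H` multiplies it by `ΔH t`. Its measure is therefore a Haar measure of `G` that scales like
`ΔH` under `H`, while `μ` scales like `Δ`; uniqueness of Haar measure forces `Δ = ΔH` on `H`,
and then `ker ΔH = H ∩ ker Δ` is open.

For the index, `N = H ⊔ ker Δ` is an open subgroup containing `H`. The fibres of
`G ⧸ H → G ⧸ N` are open and translates of each other, so they have one common positive
`μq`-measure; as `μq` is finite there are finitely many, and representatives of `G ⧸ N` give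
finitely many cosets of `Δ(H)` covering `Δ(G)`.
-/

open MeasureTheory Measure Set TopologicalSpace Topology
open scoped NNReal ENNReal Pointwise

namespace MeasureTheory.Content

variable {G : Type*} [TopologicalSpace G]

theorem mul_innerContent_comap_le (μ : Content G) (f : G ≃ₜ G) {r : ℝ≥0∞}
    (h : ∀ K : Compacts G, r * μ K ≤ μ (K.map f f.continuous)) (U : Opens G) :
    r * μ.innerContent (Opens.comap f U) ≤ μ.innerContent U := by
  simp only [innerContent, ENNReal.mul_iSup]
  refine iSup₂_le fun K hK => (h K).trans ?_
  exact μ.le_innerContent _ _ (by simpa [Compacts.coe_map, image_subset_iff] using hK)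

theorem mul_measure_preimage_of_isOpen [R1Space G] [MeasurableSpace G] [BorelSpace G]
    (μ : Content G) (f : G ≃ₜ G) {r : ℝ≥0∞} (hr₀ : r ≠ 0) (hr : r ≠ ∞)
    (h : ∀ K : Compacts G, μ (K.map f f.continuous) = r * μ K) {U : Set G} (hU : IsOpen U) :
    r * μ.measure (f ⁻¹' U) = μ.measure U := by
  have hfU : IsOpen (f ⁻¹' U) := hU.preimage f.continuous
  rw [μ.measure_apply hfU.measurableSet, μ.measure_apply hU.measurableSet,
    μ.outerMeasure_of_isOpen _ hfU, μ.outerMeasure_of_isOpen _ hU]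
  refine le_antisymm (μ.mul_innerContent_comap_le f (fun K => (h K).ge) ⟨U, hU⟩) ?_
  have h_symm (K : Compacts G) : r⁻¹ * μ K ≤ μ (K.map f.symm f.symm.continuous) := by
    rw [ENNReal.inv_mul_le_iff hr₀ hr, ← h]
    exact (congrArg μ (Compacts.ext (by simp [Compacts.coe_map, image_image]))).le
  have h_comap : Opens.comap f.symm ⟨f ⁻¹' U, hfU⟩ = ⟨U, hU⟩ := Opens.ext (by ext; simp)
  have := μ.mul_innerContent_comap_le f.symm h_symm ⟨f ⁻¹' U, hfU⟩
  rwa [h_comap, ENNReal.inv_mul_le_iff hr₀ hr] at this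

theorem isHaarMeasure_measure [Group G] [IsTopologicalGroup G] [WeaklyLocallyCompactSpace G]
    [MeasurableSpace G] [BorelSpace G] (μ : Content G)
    (h : ∀ (g : G) {K : Compacts G}, μ (K.map _ (continuous_const_mul g)) = μ K)
    {K₀ : Compacts G} (hK₀ : μ K₀ ≠ 0) : μ.measure.IsHaarMeasure where
  map_mul_left_eq_self g := by
    ext s hs
    rw [Measure.map_apply (measurable_const_mul g) hs, μ.measure_apply hs,
      μ.measure_apply (hs.preimage (measurable_const_mul g)),
      μ.is_mul_left_invariant_outerMeasure h]
  lt_top_of_isCompact K hK := ((measure_mono subset_closure).trans_lt <| by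
    rw [μ.measure_apply isClosed_closure.measurableSet]
    exact μ.outerMeasure_lt_top_of_isCompact hK.closure)
  open_pos U hU hne := by
    rw [μ.measure_apply hU.measurableSet]
    exact (μ.outerMeasure_pos_of_is_mul_left_invariant h K₀ hK₀ hU hne).ne'

end MeasureTheory.Content

section FiberMeasure

variable {G : Type*} [Group G] [MeasurableSpace G] {H : Subgroup G} (ν : Measure H)

def fiberMeasure (S : Set G) (g : G) : ℝ≥0∞ := ν {h : H | g * h ∈ S}

theorem fiberMeasure_image_mul_right [MeasurableMul H] (Δ : H →* ℝ≥0)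
    (hΔ : ∀ t, Measure.map (· * t) ν = (Δ t)⁻¹ • ν) (S : Set G) (t : H) (g : G) :
    fiberMeasure ν ((· * (t : G)) '' S) g = Δ t * fiberMeasure ν S g := by
  have h_fiber : {h : H | g * h ∈ (· * (t : G)) '' S} =
      (MeasurableEquiv.mulRight t⁻¹) ⁻¹' {h : H | g * h ∈ S} := by
    ext h
    simp [image_mul_right, mul_assoc]
  rw [fiberMeasure, h_fiber, ← MeasurableEquiv.map_apply, MeasurableEquiv.coe_mulRight, hΔ,
    map_inv, inv_inv, Measure.smul_apply, ENNReal.smul_def, smul_eq_mul, fiberMeasure]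

variable [MeasurableMul H] [ν.IsMulLeftInvariant]

theorem fiberMeasure_mul_right (S : Set G) (g : G) (t : H) :
    fiberMeasure ν S (g * t) = fiberMeasure ν S g := by
  have h_fiber : {h : H | g * t * h ∈ S} = (t * ·) ⁻¹' {h : H | g * h ∈ S} := by
    ext h
    simp [mul_assoc]
  rw [fiberMeasure, h_fiber, measure_preimage_mul, fiberMeasure]

theorem fiberMeasure_le (K : Set G) (g : G) :
    fiberMeasure ν K g ≤ ν (Subtype.val ⁻¹' (K⁻¹ * K)) := by
  rcases eq_empty_or_nonempty {h : H | g * h ∈ K} with h_empty | ⟨h₀, hh₀⟩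
  · simp [fiberMeasure, h_empty]
  calc fiberMeasure ν K g ≤ ν ((h₀⁻¹ * ·) ⁻¹' (Subtype.val ⁻¹' (K⁻¹ * K))) := by
        refine measure_mono fun h hh => ?_
        have : ((h₀⁻¹ * h : H) : G) = (g * h₀)⁻¹ * (g * h) := by push_cast; group
        rw [mem_preimage, mem_preimage, this]
        exact mul_mem_mul (inv_mem_inv.mpr hh₀) hh
    _ = ν (Subtype.val ⁻¹' (K⁻¹ * K)) := measure_preimage_mul ν _ _

def quotientFiberMeasure (S : Set G) : G ⧸ H → ℝ≥0∞ :=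
  Quotient.lift (fiberMeasure ν S) fun a b hab => by
    obtain ⟨t, rfl⟩ : ∃ t : H, b = a * t :=
      ⟨⟨a⁻¹ * b, QuotientGroup.leftRel_apply.mp hab⟩, by simp⟩
    exact (fiberMeasure_mul_right ν S a t).symm

@[simp]
theorem quotientFiberMeasure_mk (S : Set G) (g : G) :
    quotientFiberMeasure ν S g = fiberMeasure ν S g := rfl

theorem quotientFiberMeasure_mono {S T : Set G} (hST : S ⊆ T) (x : G ⧸ H) :
    quotientFiberMeasure ν S x ≤ quotientFiberMeasure ν T x := by
  induction x using QuotientGroup.induction_on with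
  | H g => exact measure_mono fun _ hh => hST hh

theorem quotientFiberMeasure_union_le (S T : Set G) (x : G ⧸ H) :
    quotientFiberMeasure ν (S ∪ T) x ≤
      quotientFiberMeasure ν S x + quotientFiberMeasure ν T x := by
  induction x using QuotientGroup.induction_on with
  | H g => exact measure_union_le _ _

theorem quotientFiberMeasure_union [MeasurableMul G] {S T : Set G} (hST : Disjoint S T)
    (hT : MeasurableSet T) (x : G ⧸ H) :
    quotientFiberMeasure ν (S ∪ T) x =
      quotientFiberMeasure ν S x + quotientFiberMeasure ν T x := by
  induction x using QuotientGroup.induction_on with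
  | H g => exact measure_union (hST.preimage _) (hT.preimage (measurable_subtype_coe.const_mul g))

theorem quotientFiberMeasure_image_mul_left (S : Set G) (g : G) (x : G ⧸ H) :
    quotientFiberMeasure ν ((g * ·) '' S) x = quotientFiberMeasure ν S (g⁻¹ • x) := by
  induction x using QuotientGroup.induction_on with
  | H g' => simp [fiberMeasure, image_mul_left, mul_assoc]

theorem quotientFiberMeasure_image_mul_right (Δ : H →* ℝ≥0)
    (hΔ : ∀ t, Measure.map (· * t) ν = (Δ t)⁻¹ • ν) (S : Set G) (t : H) (x : G ⧸ H) :
    quotientFiberMeasure ν ((· * (t : G)) '' S) x = Δ t * quotientFiberMeasure ν S x := by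
  induction x using QuotientGroup.induction_on with
  | H g => exact fiberMeasure_image_mul_right ν Δ hΔ S t g

theorem quotientFiberMeasure_le (K : Set G) (x : G ⧸ H) :
    quotientFiberMeasure ν K x ≤ ν (Subtype.val ⁻¹' (K⁻¹ * K)) := by
  induction x using QuotientGroup.induction_on with
  | H g => exact fiberMeasure_le ν K g

end FiberMeasure

section Topological

variable {G : Type*} [Group G] [TopologicalSpace G] [IsTopologicalGroup G] [MeasurableSpace G]
  {H : Subgroup G} (ν : Measure H)

theorem fiberMeasure_pos [ν.IsOpenPosMeasure] {K : Set G} {g : G} (hg : g ∈ interior K) :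
    0 < fiberMeasure ν K g :=
  calc 0 < ν {h : H | g * h ∈ interior K} :=
        (isOpen_interior.preimage (continuous_const.mul continuous_subtype_val)).measure_pos ν
          ⟨1, by simpa using hg⟩
    _ ≤ fiberMeasure ν K g := measure_mono fun _ hh => interior_subset (s := K) hh

theorem upperSemicontinuous_fiberMeasure [ν.OuterRegular] (hH : IsClosed (H : Set G))
    {K : Set G} (hK : IsCompact K) :
    UpperSemicontinuous (fiberMeasure ν K) := by
  intro g₀ a ha
  obtain ⟨O, hFO, hO, hOa⟩ := Set.exists_isOpen_lt_of_lt _ a ha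
  obtain ⟨V, hV, rfl⟩ := isOpen_induced_iff.mp hO
  have h_near : ∀ᶠ g in 𝓝 g₀, ∀ k ∈ K, g⁻¹ * k ∈ V ∪ (H : Set G)ᶜ := by
    refine hK.eventually_forall_of_forall_eventually fun k hk => ?_
    refine (continuous_fst.inv.mul continuous_snd).continuousAt.eventually
      ((hV.union hH.isOpen_compl).mem_nhds ?_)
    by_cases hkH : g₀⁻¹ * k ∈ H
    · exact Or.inl (hFO (show g₀ * (⟨_, hkH⟩ : H) ∈ K by simpa))
    · exact Or.inr hkH
  filter_upwards [h_near] with g hg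
  refine (measure_mono fun h hh => ?_).trans_lt hOa
  simpa using hg _ hh

/-- Upper semicontinuity replaces the usual Fubini-type measurability argument, which would need
the product σ-algebra on `G × H` to be Borel. -/
theorem measurable_quotientFiberMeasure [MeasurableMul H] [ν.IsMulLeftInvariant] [ν.OuterRegular]
    [MeasurableSpace (G ⧸ H)] [BorelSpace (G ⧸ H)] (hH : IsClosed (H : Set G)) {K : Set G}
    (hK : IsCompact K) :
    Measurable (quotientFiberMeasure ν K) := by
  refine UpperSemicontinuous.measurable (upperSemicontinuous_iff_isOpen_preimage.mpr fun a => ?_)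
  rw [← (QuotientGroup.isQuotientMap_mk H).isOpen_preimage]
  exact (upperSemicontinuous_fiberMeasure ν hH hK).isOpen_preimage a

end Topological

section WeilContent

variable {G : Type*} [Group G] [TopologicalSpace G] [IsTopologicalGroup G] [MeasurableSpace G]
  [BorelSpace G] {H : Subgroup G} (ν : Measure H) [ν.IsHaarMeasure] [MeasurableSpace (G ⧸ H)]
  (μq : Measure (G ⧸ H)) [IsFiniteMeasure μq]

theorem lintegral_quotientFiberMeasure_ne_top (hH : IsClosed (H : Set G)) {K : Set G}
    (hK : IsCompact K) : ∫⁻ x, quotientFiberMeasure ν K x ∂μq ≠ ∞ := by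
  have h_compact : IsCompact (Subtype.val ⁻¹' (K⁻¹ * K) : Set H) :=
    hH.isClosedEmbedding_subtypeVal.isCompact_preimage (hK.inv.mul hK)
  refine ne_top_of_le_ne_top ?_ (lintegral_mono (quotientFiberMeasure_le ν K))
  rw [lintegral_const]
  exact ENNReal.mul_ne_top h_compact.measure_lt_top.ne (measure_ne_top μq univ)

variable [ν.OuterRegular] [BorelSpace (G ⧸ H)]

noncomputable def weilContent (hH : IsClosed (H : Set G)) : Content G where
  toFun K := (∫⁻ x, quotientFiberMeasure ν K x ∂μq).toNNReal
  mono' K₁ K₂ h :=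
    ENNReal.toNNReal_mono (lintegral_quotientFiberMeasure_ne_top ν μq hH K₂.isCompact)
      (lintegral_mono (quotientFiberMeasure_mono ν h))
  sup_disjoint' K₁ K₂ h_disj _ h₂ := by
    simp only [Compacts.coe_sup]
    rw [lintegral_congr (quotientFiberMeasure_union ν h_disj h₂.measurableSet),
      lintegral_add_left (measurable_quotientFiberMeasure ν hH K₁.isCompact),
      ENNReal.toNNReal_add (lintegral_quotientFiberMeasure_ne_top ν μq hH K₁.isCompact)
        (lintegral_quotientFiberMeasure_ne_top ν μq hH K₂.isCompact)]
  sup_le' K₁ K₂ := by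
    have h₁ := lintegral_quotientFiberMeasure_ne_top ν μq hH K₁.isCompact
    have h₂ := lintegral_quotientFiberMeasure_ne_top ν μq hH K₂.isCompact
    have h_add := lintegral_add_left (μ := μq)
      (measurable_quotientFiberMeasure ν hH K₁.isCompact) (quotientFiberMeasure ν K₂)
    simp only [Compacts.coe_sup]
    rw [← ENNReal.toNNReal_add h₁ h₂, ← h_add]
    exact ENNReal.toNNReal_mono (h_add ▸ ENNReal.add_ne_top.mpr ⟨h₁, h₂⟩)
      (lintegral_mono (quotientFiberMeasure_union_le ν _ _))

theorem weilContent_apply (hH : IsClosed (H : Set G)) (K : Compacts G) :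
    weilContent ν μq hH K = ∫⁻ x, quotientFiberMeasure ν K x ∂μq :=
  ENNReal.coe_toNNReal (lintegral_quotientFiberMeasure_ne_top ν μq hH K.isCompact)

theorem weilContent_map_mul_left [SMulInvariantMeasure G (G ⧸ H) μq] (hH : IsClosed (H : Set G))
    (g : G) (K : Compacts G) :
    weilContent ν μq hH (K.map _ (continuous_const_mul g)) = weilContent ν μq hH K := by
  simp only [weilContent_apply, Compacts.coe_map, quotientFiberMeasure_image_mul_left]
  exact (measurePreserving_smul g⁻¹ μq).lintegral_comp
    (measurable_quotientFiberMeasure ν hH K.isCompact)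

theorem weilContent_map_mul_right (hH : IsClosed (H : Set G)) (Δ : H →* ℝ≥0)
    (hΔ : ∀ t, Measure.map (· * t) ν = (Δ t)⁻¹ • ν) (t : H) (K : Compacts G) :
    weilContent ν μq hH (K.map _ (continuous_mul_const (t : G))) =
      Δ t * weilContent ν μq hH K := by
  simp only [weilContent_apply, Compacts.coe_map, quotientFiberMeasure_image_mul_right ν Δ hΔ]
  exact lintegral_const_mul _ (measurable_quotientFiberMeasure ν hH K.isCompact)

theorem weilContent_ne_zero [μq.IsOpenPosMeasure] (hH : IsClosed (H : Set G)) {K : Compacts G}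
    (hK : (1 : G) ∈ interior K) :
    weilContent ν μq hH K ≠ 0 := by
  rw [weilContent_apply, ← pos_iff_ne_zero,
    lintegral_pos_iff_support (measurable_quotientFiberMeasure ν hH K.isCompact)]
  refine (QuotientGroup.isOpenMap_coe _ isOpen_interior).measure_pos μq ⟨_, 1, hK, rfl⟩
    |>.trans_le (measure_mono ?_)
  rintro _ ⟨g, hg, rfl⟩
  exact (fiberMeasure_pos ν hg).ne'

end WeilContent

section WeilMeasure

variable {G : Type*} [Group G] [TopologicalSpace G] [IsTopologicalGroup G] [MeasurableSpace G]
  [BorelSpace G] {H : Subgroup G} (ν : Measure H) [ν.IsHaarMeasure] [ν.OuterRegular]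
  [MeasurableSpace (G ⧸ H)] [BorelSpace (G ⧸ H)] (μq : Measure (G ⧸ H)) [IsFiniteMeasure μq]

noncomputable def weilMeasure (hH : IsClosed (H : Set G)) : Measure G :=
  (weilContent ν μq hH).measure

theorem isHaarMeasure_weilMeasure [LocallyCompactSpace G] [SMulInvariantMeasure G (G ⧸ H) μq]
    [μq.IsOpenPosMeasure] (hH : IsClosed (H : Set G)) : (weilMeasure ν μq hH).IsHaarMeasure := by
  obtain ⟨K₀, hK₀, h_nhds⟩ := exists_compact_mem_nhds (1 : G)
  exact Content.isHaarMeasure_measure _ (fun g K => weilContent_map_mul_left ν μq hH g K)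
    (K₀ := ⟨K₀, hK₀⟩)
    (weilContent_ne_zero ν μq hH (mem_interior_iff_mem_nhds.mpr h_nhds))

theorem weilMeasure_preimage_mul_right (hH : IsClosed (H : Set G)) (Δ : H →* ℝ≥0)
    (hΔ : ∀ t, Measure.map (· * t) ν = (Δ t)⁻¹ • ν) (t : H) {U : Set G}
    (hU : IsOpen U) :
    weilMeasure ν μq hH ((· * (t : G)) ⁻¹' U) =
      ((Δ t)⁻¹ : ℝ≥0) * weilMeasure ν μq hH U := by
  have hΔ₀ : Δ t ≠ 0 := ((Group.isUnit t).map Δ).ne_zero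
  unfold weilMeasure
  rw [← (weilContent ν μq hH).mul_measure_preimage_of_isOpen (Homeomorph.mulRight (t : G))
      (by exact_mod_cast hΔ₀) ENNReal.coe_ne_top
      (weilContent_map_mul_right ν μq hH Δ hΔ t) hU,
    ENNReal.coe_inv hΔ₀, ← mul_assoc, ENNReal.inv_mul_cancel (by exact_mod_cast hΔ₀)
      ENNReal.coe_ne_top, one_mul]
  rfl

end WeilMeasure

theorem eq_of_measure_preimage_mul_right_eq_mul {G : Type*} [Group G] [TopologicalSpace G]
    [IsTopologicalGroup G] [LocallyCompactSpace G] [MeasurableSpace G] [BorelSpace G]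
    (μ μ' : Measure G) [μ.IsHaarMeasure] [μ'.IsHaarMeasure] (t : G) {a b : ℝ≥0∞}
    (ha : ∀ U, IsOpen U → μ ((· * t) ⁻¹' U) = a * μ U)
    (hb : ∀ U, IsOpen U → μ' ((· * t) ⁻¹' U) = b * μ' U) : a = b := by
  obtain ⟨K, hK, h_nhds⟩ := exists_compact_mem_nhds (1 : G)
  have hU : IsOpen (interior K) := isOpen_interior
  have hU₀ : μ (interior K) ≠ 0 :=
    (hU.measure_pos μ ⟨1, mem_interior_iff_mem_nhds.mpr h_nhds⟩).ne'
  have hU_top : μ (interior K) ≠ ∞ :=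
    ((measure_mono interior_subset).trans_lt hK.measure_lt_top).ne
  have h_smul {V : Set G} (hV : IsOpen V) : μ' V = haarScalarFactor μ' μ * μ V :=
    measure_isHaarMeasure_eq_smul_of_isOpen μ' μ hV
  have hc : (haarScalarFactor μ' μ : ℝ≥0∞) ≠ 0 := by
    exact_mod_cast (haarScalarFactor_pos_of_isHaarMeasure μ' μ).ne'
  refine (ENNReal.mul_right_inj (mul_ne_zero hc hU₀)
    (ENNReal.mul_ne_top ENNReal.coe_ne_top hU_top)).mp ?_
  calc haarScalarFactor μ' μ * μ (interior K) * a
      = haarScalarFactor μ' μ * μ ((· * t) ⁻¹' interior K) := by rw [ha _ hU]; ring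
    _ = μ' ((· * t) ⁻¹' interior K) := (h_smul (hU.preimage (continuous_mul_const t))).symm
    _ = haarScalarFactor μ' μ * μ (interior K) * b := by rw [hb _ hU, h_smul hU]; ring

theorem finiteIndex_of_isOpen_of_le {G : Type*} [Group G] [TopologicalSpace G]
    [IsTopologicalGroup G] {H N : Subgroup G} (hN : IsOpen (N : Set G)) (hHN : H ≤ N)
    [MeasurableSpace (G ⧸ H)] [BorelSpace (G ⧸ H)] (μq : Measure (G ⧸ H))
    [IsFiniteMeasure μq] [SMulInvariantMeasure G (G ⧸ H) μq] [μq.IsOpenPosMeasure] :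
    N.FiniteIndex := by
  have : DiscreteTopology (G ⧸ N) := QuotientGroup.discreteTopology hN
  let π : G ⧸ H → G ⧸ N := Subgroup.quotientMapOfLE hHN
  have hπ : Continuous π :=
    (QuotientGroup.isQuotientMap_mk H).continuous_iff.mpr continuous_quot_mk
  have h_fiber_open (q : G ⧸ N) : IsOpen (π ⁻¹' {q}) := (isOpen_discrete _).preimage hπ
  have h_fiber_translate (g : G) :
      π ⁻¹' {(g : G ⧸ N)} = (g⁻¹ • ·) ⁻¹' (π ⁻¹' {((1 : G) : G ⧸ N)}) := by
    ext x
    induction x using QuotientGroup.induction_on with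
    | H y => simp [π, QuotientGroup.eq, mul_inv_rev]
  have h_fiber_measure (q : G ⧸ N) :
      μq (π ⁻¹' {q}) = μq (π ⁻¹' {((1 : G) : G ⧸ N)}) := by
    induction q using QuotientGroup.induction_on with
    | H g => rw [h_fiber_translate, measure_preimage_smul]
  have h_pos : 0 < μq (π ⁻¹' {((1 : G) : G ⧸ N)}) :=
    (h_fiber_open _).measure_pos μq ⟨(1 : G), rfl⟩
  have h_finite := finite_const_le_meas_of_disjoint_iUnion μq h_pos
    (fun q => (h_fiber_open q).measurableSet)
    (fun q₁ q₂ hq => (disjoint_singleton.mpr hq).preimage π) (measure_ne_top μq _)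
  have : Finite (G ⧸ N) := finite_univ_iff.mp (h_finite.subset fun q _ => (h_fiber_measure q).ge)
  exact Subgroup.finiteIndex_of_finite_quotient

theorem MonoidHom.exists_finset_cover_range_of_finiteIndex {G M : Type*} [Group G] [Monoid M]
    (Δ : G →* M) (H : Subgroup G) [(H ⊔ Δ.ker).FiniteIndex] :
    ∃ D : Finset M, (D : Set M) ⊆ Set.range Δ ∧
      ∀ x ∈ Set.range Δ, ∃ d ∈ D, ∃ t : H, x = d * Δ t := by
  let out : G ⧸ (H ⊔ Δ.ker) → G := Quotient.out
  refine ⟨(finite_range fun q => Δ (out q)).toFinset, ?_, ?_⟩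
  · simp only [Finite.coe_toFinset]
    exact range_comp_subset_range out Δ
  rintro _ ⟨g, rfl⟩
  obtain ⟨n, hn⟩ := QuotientGroup.mk_out_eq_mul (H ⊔ Δ.ker) g
  obtain ⟨t, ht, k, hk, htk⟩ := Subgroup.mem_sup_of_normal_right.mp (inv_mem n.2)
  refine ⟨Δ (out g), by simp, ⟨t, ht⟩, ?_⟩
  have : g = out g * t * k := by rw [mul_assoc, htk, show out g = g * n from hn]; group
  rw [congrArg Δ this, map_mul, MonoidHom.mem_ker.mp hk, mul_one, map_mul]

theorem finite_covolume_subgroup_properties_general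
    {G : Type*} [Group G] [TopologicalSpace G] [IsTopologicalGroup G]
    [LocallyCompactSpace G] [MeasurableSpace G] [BorelSpace G]
    (μ : Measure G) [μ.IsHaarMeasure]
    (Δ : G →* ℝ≥0)
    (hΔ : ∀ s : G, Measure.map (· * s) μ = (Δ s)⁻¹ • μ)
    (hGau : IsOpen (Δ.ker : Set G))
    (H : Subgroup G) (hHclosed : IsClosed (H : Set G))
    (ν : Measure H) [ν.IsHaarMeasure] [ν.Regular]
    (ΔH : H →* ℝ≥0)
    (hΔH : ∀ t : H, Measure.map (· * t) ν = (ΔH t)⁻¹ • ν)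
    [MeasurableSpace (G ⧸ H)] [BorelSpace (G ⧸ H)]
    (μq : Measure (G ⧸ H)) (hμq_ne : μq ≠ 0) [IsFiniteMeasure μq] [μq.Regular]
    (hμq_inv : ∀ g : G, Measure.map (fun x : G ⧸ H => g • x) μq = μq) :
    (∀ t : H, Δ (t : G) = ΔH t) ∧
    IsOpen (ΔH.ker : Set H) ∧
    (∃ D : Finset ℝ≥0, (D : Set ℝ≥0) ⊆ Set.range Δ ∧
      ∀ x ∈ Set.range Δ, ∃ d ∈ D, ∃ t : H, x = d * ΔH t) := by
  have : SMulInvariantMeasure G (G ⧸ H) μq :=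
    ⟨fun g s hs => by rw [← map_apply (measurable_const_smul g) hs, hμq_inv]⟩
  have : μq.IsOpenPosMeasure :=
    ⟨fun U hU hne => (measure_isOpen_pos_of_smulInvariant_of_ne_zero G hμq_ne hU hne).ne'⟩
  have : (weilMeasure ν μq hHclosed).IsHaarMeasure := isHaarMeasure_weilMeasure ν μq hHclosed
  have h_modular (t : H) : Δ t = ΔH t := by
    have := eq_of_measure_preimage_mul_right_eq_mul μ (weilMeasure ν μq hHclosed) t
      (fun U hU => by rw [← map_apply (measurable_mul_const _) hU.measurableSet, hΔ]; rfl)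
      (fun U hU => weilMeasure_preimage_mul_right ν μq hHclosed ΔH hΔH t hU)
    exact inv_injective (ENNReal.coe_injective this)
  refine ⟨h_modular, ?_, ?_⟩
  · have h_ker : (ΔH.ker : Set H) = Subtype.val ⁻¹' (Δ.ker : Set G) := by
      ext t
      simp [h_modular]
    exact h_ker ▸ hGau.preimage continuous_subtype_val
  · have := finiteIndex_of_isOpen_of_le (Subgroup.isOpen_mono le_sup_right hGau) le_sup_left μq
    simpa only [h_modular] using Δ.exists_finset_cover_range_of_finiteIndex H

/-- Let `G` be almost unimodular and `H ≤ G` a closed subgroup of finite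
covolume: the coset space `G/H` carries a finite nonzero `G`-invariant Radon measure.
Then (a) `Δ_G` restricted to `H` equals `Δ_H`; (b) `H` is almost unimodular; and
(c) `Δ_H(H)` has finite index in `Δ_G(G)`: finitely many cosets `d · Δ_H(H)` with
`d ∈ Δ_G(G)` cover `Δ_G(G)`. -/
theorem finite_covolume_subgroup_properties
    {G : Type*} [Group G] [TopologicalSpace G] [IsTopologicalGroup G]
    [LocallyCompactSpace G] [T2Space G] [MeasurableSpace G] [BorelSpace G]
    (μ : Measure G) [μ.IsHaarMeasure] [μ.Regular]
    (Δ : G →* ℝ≥0) (hΔc : Continuous Δ) (hΔpos : ∀ s, 0 < Δ s)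
    (hΔ : ∀ s : G, Measure.map (· * s) μ = (Δ s)⁻¹ • μ)
    (hGau : IsOpen (Δ.ker : Set G))
    (H : Subgroup G) (hHclosed : IsClosed (H : Set G))
    (ν : Measure H) [ν.IsHaarMeasure] [ν.Regular]
    (ΔH : H →* ℝ≥0) (hΔHc : Continuous ΔH) (hΔHpos : ∀ t, 0 < ΔH t)
    (hΔH : ∀ t : H, Measure.map (· * t) ν = (ΔH t)⁻¹ • ν)
    [MeasurableSpace (G ⧸ H)] [BorelSpace (G ⧸ H)]
    (μq : Measure (G ⧸ H)) (hμq_ne : μq ≠ 0) [IsFiniteMeasure μq] [μq.Regular]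
    (hμq_inv : ∀ g : G, Measure.map (fun x : G ⧸ H => g • x) μq = μq) :
    (∀ t : H, Δ (t : G) = ΔH t) ∧
    IsOpen (ΔH.ker : Set H) ∧
    (∃ D : Finset ℝ≥0, (D : Set ℝ≥0) ⊆ Set.range Δ ∧
      ∀ x ∈ Set.range Δ, ∃ d ∈ D, ∃ t : H, x = d * ΔH t) :=
  finite_covolume_subgroup_properties_general μ Δ hΔ hGau H hHclosed ν ΔH hΔH μq hμq_ne hμq_inv
end

section
/- Let G be a locally compact group whose modular function Δ_G has image Δ_G(G) a proper subgroup of ℝ₊ (i.e., Δ_G(G) ≠ ℝ₊). Then G is almost unimodular, i.e., ker Δ_G is open in G. -/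
/-!
Let `Q = G ⧸ ker Δ`. The induced map `Q → ℝ≥0` is a continuous injection, and a proper subgroup
of the positive reals contains no nondegenerate interval (an interval would generate everything),
so `Q` is totally disconnected. By van Dantzig's theorem the locally compact group `Q` has a compact
open subgroup; its image under `Δ` is a bounded subgroup of the positive reals, hence trivial. Its
preimage in `G` is then an open subgroup contained in `ker Δ`.
-/

open MeasureTheory Set
open scoped NNReal Pointwise

namespace MonoidHom

variable {G : Type*} [Group G]

theorem range_eq_Ioi_of_Icc_subset_range (f : G →* ℝ≥0) {a b : ℝ≥0} (hab : a < b)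
    (h : Icc a b ⊆ Set.range f) : Set.range f = Ioi 0 := by
  have hpos : ∀ g, 0 < f g := fun g => pos_iff_ne_zero.2 ((Group.isUnit g).map f).ne_zero
  obtain ⟨g₀, hg₀⟩ := h ⟨le_rfl, hab.le⟩
  have ha : a ≠ 0 := hg₀ ▸ (hpos g₀).ne'
  have hc : 1 < b / a := (one_lt_div (pos_iff_ne_zero.2 ha)).2 hab
  have hIcc : Icc 1 (b / a) ⊆ Set.range f := by
    rintro y ⟨hy₁, hy₂⟩
    obtain ⟨g, hg⟩ := h ⟨le_mul_of_one_le_right' hy₁, (le_div_iff₀' (pos_iff_ne_zero.2 ha)).1 hy₂⟩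
    exact ⟨g₀⁻¹ * g, by rw [map_mul, map_inv, hg, hg₀, inv_mul_cancel_left₀ ha]⟩
  have hIci : Ici 1 ⊆ Set.range f := by
    intro y hy
    -- `y` is the `n`-th power of `y ^ (1 / n) ∈ [1, b / a]` once `y ≤ (b / a) ^ n`
    obtain ⟨n, hn⟩ := pow_unbounded_of_one_lt y hc
    have hn0 : n ≠ 0 := by rintro rfl; exact (pow_zero (b / a) ▸ hn).not_ge hy
    set z := y ^ (n⁻¹ : ℝ)
    have hzn : z ^ n = y := NNReal.rpow_inv_natCast_pow y hn0
    obtain ⟨g, hg⟩ := hIcc ⟨le_of_pow_le_pow_left₀ hn0 z.2 (by rwa [one_pow, hzn]),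
      le_of_pow_le_pow_left₀ hn0 (by positivity) (by rw [hzn]; exact hn.le)⟩
    exact ⟨g ^ n, by rw [map_pow, hg, hzn]⟩
  refine Subset.antisymm (fun _ ⟨g, hg⟩ => hg ▸ hpos g) fun y (hy : 0 < y) => ?_
  rcases le_total 1 y with hy₁ | hy₁
  · exact hIci hy₁
  · obtain ⟨g, hg⟩ := hIci (one_le_inv₀ hy |>.2 hy₁)
    exact ⟨g⁻¹, by rw [map_inv, hg, inv_inv]⟩

theorem isTotallyDisconnected_range (f : G →* ℝ≥0) (hf : Set.range f ≠ Ioi 0) :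
    IsTotallyDisconnected (Set.range f) := by
  intro t hts ht x hx y hy
  have hnot_lt : ∀ x ∈ t, ∀ y ∈ t, ¬x < y := fun x hx y hy hxy =>
    hf (f.range_eq_Ioi_of_Icc_subset_range hxy ((ht.Icc_subset hx hy).trans hts))
  exact (not_lt.1 (hnot_lt y hy x hx)).antisymm (not_lt.1 (hnot_lt x hx y hy))

theorem le_ker_of_bddAbove_image (f : G →* ℝ≥0) {H : Subgroup G} (hH : BddAbove (f '' H)) :
    H ≤ f.ker := by
  have hle : ∀ x ∈ H, f x ≤ 1 := by
    intro x hx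
    by_contra! h
    obtain ⟨B, hB⟩ := hH
    obtain ⟨n, hn⟩ := pow_unbounded_of_one_lt B h
    exact hn.not_ge (hB ⟨x ^ n, pow_mem hx n, map_pow f x n⟩)
  intro x hx
  refine (hle x hx).antisymm ?_
  calc 1 = f x * f x⁻¹ := by rw [← map_mul, mul_inv_cancel, map_one]
    _ ≤ f x * 1 := by gcongr; exact hle _ (inv_mem hx)
    _ = f x := mul_one _

variable [TopologicalSpace G]

theorem continuous_lift_ker (f : G →* ℝ≥0) (hf : Continuous f) :
    Continuous (QuotientGroup.lift f.ker f le_rfl) :=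
  (QuotientGroup.isQuotientMap_mk _).continuous_iff.2 hf

theorem totallyDisconnectedSpace_quotient_ker (f : G →* ℝ≥0) (hf : Continuous f)
    (hrange : Set.range f ≠ Ioi 0) : TotallyDisconnectedSpace (G ⧸ f.ker) where
  isTotallyDisconnected_univ := by
    refine isTotallyDisconnected_of_image (f.continuous_lift_ker hf).continuousOn
      ((QuotientGroup.injective_lift_iff _ _ _).2 rfl) ?_
    rw [image_univ, ← QuotientGroup.mk_surjective.range_comp]
    exact f.isTotallyDisconnected_range hrange

end MonoidHom

section

variable {G : Type*} [Group G] [TopologicalSpace G] [IsTopologicalGroup G]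

theorem IsCompact.exists_openSubgroup_subset {C : Set G} (hC : IsCompact C) (hCo : IsOpen C)
    (h1 : 1 ∈ C) : ∃ U : OpenSubgroup G, (U : Set G) ⊆ C := by
  obtain ⟨V, hV, hVC⟩ := compact_open_separated_mul_left hC hCo subset_rfl
  have hsmul : ∀ v ∈ V, v • C ⊆ C := fun v hv => (smul_set_subset_smul hv).trans hVC
  let S := MulAction.stabilizer G C
  have hS : V ∩ V⁻¹ ⊆ S := fun v hv => (hsmul v hv.1).antisymm
    (subset_smul_set_iff.2 (hsmul v⁻¹ hv.2))
  refine ⟨⟨S, S.isOpen_of_mem_nhds (g := 1)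
    (Filter.mem_of_superset (Filter.inter_mem hV (inv_mem_nhds_one G hV)) hS)⟩, ?_⟩
  intro g (hg : g • C = C)
  simpa [hg] using smul_mem_smul_set (a := g) h1

theorem exists_isCompact_openSubgroup [LocallyCompactSpace G] [T2Space G]
    [TotallyDisconnectedSpace G] : ∃ U : OpenSubgroup G, IsCompact (U : Set G) := by
  obtain ⟨K, hK, hK1⟩ := exists_compact_mem_nhds (1 : G)
  obtain ⟨C, hC, h1C, hCK⟩ := loc_compact_Haus_tot_disc_of_zero_dim.exists_subset_of_mem_open
    (mem_interior_iff_mem_nhds.2 hK1) isOpen_interior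
  have hCK : C ⊆ K := hCK.trans interior_subset
  obtain ⟨U, hUC⟩ := (hK.of_isClosed_subset hC.1 hCK).exists_openSubgroup_subset hC.2 h1C
  exact ⟨U, hK.of_isClosed_subset U.isClosed (hUC.trans hCK)⟩

end

theorem almost_unimodular_of_range_modularFunction_proper_general
    {G : Type*} [Group G] [TopologicalSpace G] [IsTopologicalGroup G]
    [LocallyCompactSpace G]
    (Δ : G →* ℝ≥0) (hΔc : Continuous Δ)
    (hproper : Set.range Δ ≠ {x : ℝ≥0 | 0 < x}) :
    IsOpen (Δ.ker : Set G) := by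
  -- makes `G ⧸ Δ.ker` Hausdorff
  have : IsClosed (Δ.ker : Set G) := isClosed_singleton.preimage hΔc
  have := Δ.totallyDisconnectedSpace_quotient_ker hΔc hproper
  obtain ⟨U, hU⟩ := exists_isCompact_openSubgroup (G := G ⧸ Δ.ker)
  have hUker := (QuotientGroup.lift Δ.ker Δ le_rfl).le_ker_of_bddAbove_image
    (hU.image (Δ.continuous_lift_ker hΔc)).bddAbove
  exact Subgroup.isOpen_mono (H₁ := U.toSubgroup.comap (QuotientGroup.mk' Δ.ker))
    (fun x hx => hUker hx) (U.isOpen.preimage continuous_quot_mk)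

/-- If the image of the modular function `Δ_G` of a locally compact group `G`
is a proper subgroup of the positive reals `ℝ₊` (i.e. `Δ_G(G) ≠ ℝ₊`), then `G` is almost
unimodular: `ker Δ_G` is open. -/
theorem almost_unimodular_of_range_modularFunction_proper
    {G : Type*} [Group G] [TopologicalSpace G] [IsTopologicalGroup G]
    [LocallyCompactSpace G] [T2Space G] [MeasurableSpace G] [BorelSpace G]
    (μ : Measure G) [μ.IsHaarMeasure] [μ.Regular]
    (Δ : G →* ℝ≥0) (hΔc : Continuous Δ) (hΔpos : ∀ s, 0 < Δ s)
    (hΔ : ∀ s : G, Measure.map (· * s) μ = (Δ s)⁻¹ • μ)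
    (hproper : Set.range Δ ≠ {x : ℝ≥0 | 0 < x}) :
    IsOpen (Δ.ker : Set G) :=
  almost_unimodular_of_range_modularFunction_proper_general Δ hΔc hproper
end
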